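/- arXiv:1909.02934 — 8 statements merged into one kernel-verified Lean document; each statement's English description precedes it below -/
import Mathlib

section
/- Let V be a Hilbert space, A : V → V* be μ_A-strongly monotone and L_A-Lipschitz, and Φ : V → V be L_Φ-Lipschitz with L_Φ < μ_A / L_A. Then the composition B := A ∘ (I − Φ)^{-1} is strongly monotone with constant (μ_A − L_A·L_Φ)/(1 + L_Φ)², i.e., ⟨B(y₁) − B(y₂), y₁ − y₂⟩ ≥ (μ_A − L_A·L_Φ)/(1 + L_Φ)² · ‖y₁ − y₂‖² for all y₁, y₂ ∈ V. -/
theorem composition_strongly_monotone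
    {V : Type*} [NormedAddCommGroup V] [InnerProductSpace ℝ V] [CompleteSpace V]
    (A : V → StrongDual ℝ V) (Φ : V → V)
    (μA LA LΦ : ℝ) (hμA : 0 < μA) (hμL : μA ≤ LA)
    (hAmono : ∀ y₁ y₂ : V, μA * ‖y₁ - y₂‖ ^ 2 ≤ (A y₁ - A y₂) (y₁ - y₂))
    (hALip : ∀ y₁ y₂ : V, ‖A y₁ - A y₂‖ ≤ LA * ‖y₁ - y₂‖)
    (hΦ0 : 0 ≤ LΦ) (hΦ : LΦ < μA / LA)
    (hΦLip : ∀ y₁ y₂ : V, ‖Φ y₁ - Φ y₂‖ ≤ LΦ * ‖y₁ - y₂‖) :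
    ∀ y₁ y₂ : V,
      (μA - LA * LΦ) / (1 + LΦ) ^ 2 * ‖y₁ - y₂‖ ^ 2 ≤
        (A (Function.invFun (fun y : V => y - Φ y) y₁) -
         A (Function.invFun (fun y : V => y - Φ y) y₂)) (y₁ - y₂) := by
  have hLA : 0 < LA := lt_of_lt_of_le hμA hμL
  have hΦ1 : LΦ < 1 := lt_of_lt_of_le hΦ ((div_le_one hLA).mpr hμL)
  -- surjectivity of y ↦ y - Φ y
  have hsurj : ∀ y : V, ∃ x : V, x - Φ x = y := by
    intro y
    set k : NNReal := ⟨LΦ, hΦ0⟩ with hk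
    have hlip : LipschitzWith k (fun x => Φ x + y) := by
      apply LipschitzWith.of_dist_le_mul
      intro a b
      simp only [dist_eq_norm, add_sub_add_right_eq_sub]
      exact hΦLip a b
    have hcw : ContractingWith k (fun x => Φ x + y) := ⟨by exact_mod_cast hΦ1, hlip⟩
    have : Nonempty V := ⟨0⟩
    refine ⟨hcw.fixedPoint (fun x => Φ x + y), ?_⟩
    have hfix := hcw.fixedPoint_isFixedPt (f := fun x => Φ x + y)
    simp only [Function.IsFixedPt] at hfix
    nth_rewrite 1 [← hfix]
    abel
  intro y₁ y₂
  set g : V → V := fun y => y - Φ y with hg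
  set x₁ := Function.invFun g y₁ with hx₁
  set x₂ := Function.invFun g y₂ with hx₂
  have h₁ : x₁ - Φ x₁ = y₁ := Function.invFun_eq (hsurj y₁)
  have h₂ : x₂ - Φ x₂ = y₂ := Function.invFun_eq (hsurj y₂)
  set f := A x₁ - A x₂ with hf
  have hy : y₁ - y₂ = (x₁ - x₂) - (Φ x₁ - Φ x₂) := by
    rw [← h₁, ← h₂]; abel
  have hfval : f (y₁ - y₂) = f (x₁ - x₂) - f (Φ x₁ - Φ x₂) := by
    rw [hy, map_sub]
  have hbound : |f (Φ x₁ - Φ x₂)| ≤ LA * LΦ * ‖x₁ - x₂‖ ^ 2 := by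
    calc |f (Φ x₁ - Φ x₂)| ≤ ‖f‖ * ‖Φ x₁ - Φ x₂‖ := f.le_opNorm _
      _ ≤ (LA * ‖x₁ - x₂‖) * (LΦ * ‖x₁ - x₂‖) := by
          apply mul_le_mul (hALip x₁ x₂) (hΦLip x₁ x₂) (norm_nonneg _)
          positivity
      _ = LA * LΦ * ‖x₁ - x₂‖ ^ 2 := by ring
  have hmain : (μA - LA * LΦ) * ‖x₁ - x₂‖ ^ 2 ≤ f (y₁ - y₂) := by
    rw [hfval]
    have := hAmono x₁ x₂
    nlinarith [abs_le.mp hbound]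
  have hnorm : ‖y₁ - y₂‖ ≤ (1 + LΦ) * ‖x₁ - x₂‖ := by
    rw [hy]
    calc ‖(x₁ - x₂) - (Φ x₁ - Φ x₂)‖ ≤ ‖x₁ - x₂‖ + ‖Φ x₁ - Φ x₂‖ := norm_sub_le _ _
      _ ≤ ‖x₁ - x₂‖ + LΦ * ‖x₁ - x₂‖ := by linarith [hΦLip x₁ x₂]
      _ = (1 + LΦ) * ‖x₁ - x₂‖ := by ring
  have hμLΦ : 0 < μA - LA * LΦ := by
    have := (lt_div_iff₀ hLA).mp hΦ
    nlinarith
  have hsq : ‖y₁ - y₂‖ ^ 2 ≤ (1 + LΦ) ^ 2 * ‖x₁ - x₂‖ ^ 2 := by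
    nlinarith [norm_nonneg (y₁ - y₂), norm_nonneg (x₁ - x₂)]
  have h1Φ : (0:ℝ) < (1 + LΦ) ^ 2 := by positivity
  calc (μA - LA * LΦ) / (1 + LΦ) ^ 2 * ‖y₁ - y₂‖ ^ 2
      ≤ (μA - LA * LΦ) / (1 + LΦ) ^ 2 * ((1 + LΦ) ^ 2 * ‖x₁ - x₂‖ ^ 2) := by
        apply mul_le_mul_of_nonneg_left hsq; positivity
    _ = (μA - LA * LΦ) * ‖x₁ - x₂‖ ^ 2 := by field_simp
    _ ≤ f (y₁ - y₂) := hmain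
end

section
/- Let V be a Hilbert space and g : V → ℝ be a Fréchet differentiable convex function whose derivative g′ : V → V* is μ-strongly monotone and L-Lipschitz. Then for all x₁, x₂ ∈ V: ⟨g′(x₁) − g′(x₂), x₁ − x₂⟩ ≥ (μL/(μ + L))‖x₁ − x₂‖² + (1/(μ + L))‖g′(x₁) − g′(x₂)‖²_{V*}. -/
open InnerProductSpace

/-- Gradient inequality from a monotone derivative. -/
lemma grad_ineq_of_monotone {V : Type*} [NormedAddCommGroup V] [InnerProductSpace ℝ V]
    (f : V → ℝ) (f' : V → StrongDual ℝ V)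
    (hf : ∀ x, HasFDerivAt f (f' x) x)
    (hm : ∀ x y : V, 0 ≤ (f' x - f' y) (x - y)) (x y : V) :
    f x + f' x (y - x) ≤ f y := by
  set d := y - x with hd
  set φ : ℝ → ℝ := fun t => f (x + t • d) - t * (f' x d) with hφ
  have hγ : ∀ t : ℝ, HasDerivAt (fun t : ℝ => x + t • d) d t := by
    intro t
    simpa using ((hasDerivAt_id t).smul_const d).const_add x
  have hφ' : ∀ t : ℝ, HasDerivAt φ ((f' (x + t • d)) d - f' x d) t := by
    intro t
    have h1 : HasDerivAt (fun t : ℝ => f (x + t • d)) ((f' (x + t • d)) d) t := by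
      exact (hf (x + t • d)).comp_hasDerivAt t (hγ t)
    have h2 := (hasDerivAt_id t).mul_const (f' x d)
    simp only [id, one_mul] at h2
    exact h1.sub h2
  have hmono : MonotoneOn φ (Set.Icc (0:ℝ) 1) := by
    apply monotoneOn_of_deriv_nonneg (convex_Icc 0 1)
    · exact fun t _ => (hφ' t).continuousAt.continuousWithinAt
    · exact fun t _ => ((hφ' t).differentiableAt).differentiableWithinAt
    · intro t ht
      rw [interior_Icc] at ht
      rw [(hφ' t).deriv]
      have h0 := hm (x + t • d) x
      have he : (f' (x + t • d) - f' x) (x + t • d - x) =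
          t * ((f' (x + t • d)) d - f' x d) := by
        have : x + t • d - x = t • d := by abel
        rw [this]
        simp [map_smul, mul_sub]
      rw [he] at h0
      nlinarith [ht.1]
  have h01 := hmono (Set.mem_Icc.2 ⟨le_refl 0, zero_le_one⟩)
      (Set.mem_Icc.2 ⟨zero_le_one, le_refl 1⟩) zero_le_one
  have e0 : φ 0 = f x := by simp [hφ]
  have e1 : φ 1 = f y - f' x d := by simp [hφ, hd]
  rw [e0, e1] at h01
  linarith

/-- One-sided Baillon–Haddad estimate: if `f` has monotone derivative `f'` and satisfies
the descent inequality with constant `C`, then `f y ≥ f x + f' x (y-x) + ‖f' y - f' x‖²/(2C)`. -/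
lemma baillon_haddad_onesided {V : Type*} [NormedAddCommGroup V] [InnerProductSpace ℝ V]
    [CompleteSpace V]
    (f : V → ℝ) (f' : V → StrongDual ℝ V)
    (hf : ∀ x, HasFDerivAt f (f' x) x)
    (hm : ∀ x y : V, 0 ≤ (f' x - f' y) (x - y))
    (C : ℝ) (hC : 0 < C)
    (hdesc : ∀ x y : V, f y ≤ f x + f' x (y - x) + (C/2) * ‖y - x‖^2)
    (x y : V) :
    f x + f' x (y - x) + (1/(2*C)) * ‖f' y - f' x‖^2 ≤ f y := by
  set u := (toDual ℝ V).symm (f' y - f' x) with hu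
  have hun : ‖u‖ = ‖f' y - f' x‖ := LinearIsometryEquiv.norm_map _ _
  set z := y - C⁻¹ • u with hz
  have h1 := grad_ineq_of_monotone f f' hf hm x z
  have h2 := hdesc y z
  have hzy : z - y = -(C⁻¹ • u) := by rw [hz]; abel
  have hzx : f' x (z - x) = f' x (y - x) - C⁻¹ * f' x u := by
    have : z - x = (y - x) + -(C⁻¹ • u) := by rw [hz]; abel
    rw [this]
    simp [map_smul]
    ring
  have hfyz : f' y (z - y) = - (C⁻¹ * f' y u) := by
    rw [hzy]; simp [map_smul]
  have hnz : ‖z - y‖^2 = C⁻¹^2 * ‖u‖^2 := by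
    rw [hzy, norm_neg, norm_smul]
    simp [mul_pow, abs_of_pos (inv_pos.2 hC)]
  have hinner : (f' y - f' x) u = ‖u‖^2 := by
    have := toDual_symm_apply (𝕜 := ℝ) (E := V) (y := f' y - f' x) (x := u)
    rw [← hu] at this
    rw [← this, real_inner_self_eq_norm_sq]
  have hdiff : f' y u - f' x u = ‖u‖^2 := by
    have : (f' y - f' x) u = f' y u - f' x u := by simp
    linarith [hinner, this.symm.le]
  rw [hzx] at h1
  rw [hfyz, hnz] at h2
  have h3 : C⁻¹ * (f' y u) - C⁻¹ * (f' x u) = C⁻¹ * ‖u‖^2 := by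
    rw [← mul_sub, hdiff]
  have key : f x + f' x (y - x) + (C⁻¹ - C/2 * C⁻¹^2) * ‖u‖^2 ≤ f y := by
    nlinarith [h1, h2, h3]
  have : C⁻¹ - C/2 * C⁻¹^2 = 1/(2*C) := by field_simp; ring
  rw [this] at key
  rwa [hun] at key

set_option maxHeartbeats 1000000 in
theorem convex_gradient_cocoercivity
    {V : Type*} [NormedAddCommGroup V] [InnerProductSpace ℝ V] [CompleteSpace V]
    (g : V → ℝ) (g' : V → StrongDual ℝ V)
    (hconv : ConvexOn ℝ Set.univ g)
    (hderiv : ∀ x : V, HasFDerivAt g (g' x) x)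
    (μ L : ℝ) (hμ : 0 < μ) (hμL : μ ≤ L)
    (hmono : ∀ x₁ x₂ : V, μ * ‖x₁ - x₂‖ ^ 2 ≤ (g' x₁ - g' x₂) (x₁ - x₂))
    (hLip : ∀ x₁ x₂ : V, ‖g' x₁ - g' x₂‖ ≤ L * ‖x₁ - x₂‖) :
    ∀ x₁ x₂ : V,
      μ * L / (μ + L) * ‖x₁ - x₂‖ ^ 2 + (1 / (μ + L)) * ‖g' x₁ - g' x₂‖ ^ 2 ≤
        (g' x₁ - g' x₂) (x₁ - x₂) := by
  intro x₁ x₂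
  have hμL0 : (0:ℝ) < μ + L := by linarith
  have hCS : ∀ x y : V, (g' x - g' y) (x - y) ≤ ‖g' x - g' y‖ * ‖x - y‖ := fun x y =>
    le_trans (le_abs_self _) ((g' x - g' y).le_opNorm (x - y))
  rcases eq_or_lt_of_le hμL with heq | hlt
  · -- μ = L case
    subst heq
    have h1 := hmono x₁ x₂
    have h2 := hLip x₁ x₂
    have h3 := hCS x₁ x₂
    have hn : ‖g' x₁ - g' x₂‖ ^ 2 ≤ μ^2 * ‖x₁ - x₂‖^2 := by
      nlinarith [norm_nonneg (g' x₁ - g' x₂), norm_nonneg (x₁ - x₂)]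
    have e : μ * μ / (μ + μ) * ‖x₁ - x₂‖ ^ 2 + 1 / (μ + μ) * ‖g' x₁ - g' x₂‖ ^ 2
        = (μ * μ * ‖x₁ - x₂‖ ^ 2 + ‖g' x₁ - g' x₂‖ ^ 2) / (μ + μ) := by
      field_simp
    rw [e, div_le_iff₀ (by linarith : (0:ℝ) < μ + μ)]
    nlinarith
  · -- μ < L case
    set C := L - μ with hC
    have hC0 : (0:ℝ) < C := by linarith
    set h : V → ℝ := fun x => g x - (μ/2) * ‖x‖^2 with hhdef
    set h' : V → StrongDual ℝ V := fun x => g' x - μ • (toDual ℝ V x) with hh'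
    have hhd : ∀ x, HasFDerivAt h (h' x) x := by
      intro x
      have hsq : HasFDerivAt (fun x : V => (μ/2) * ‖x‖^2) (μ • (toDual ℝ V x)) x := by
        have h0 : HasFDerivAt (fun x : V => (μ/2) * ‖x‖^2) ((μ/2) • (2 • innerSL ℝ x)) x :=
          ((hasStrictFDerivAt_norm_sq x).hasFDerivAt).const_mul (μ/2)
        convert h0 using 1
        ext y
        simp [two_smul, toDual_apply_apply, innerSL_apply_apply, smul_smul]
        ring
      exact (hderiv x).sub hsq
    -- key identities
    have happ : ∀ x y : V, (h' x - h' y) (x - y) = (g' x - g' y) (x - y) - μ * ‖x - y‖^2 := by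
      intro x y
      simp only [hh']
      have : g' x - μ • (toDual ℝ V) x - (g' y - μ • (toDual ℝ V) y)
          = (g' x - g' y) - μ • (toDual ℝ V (x - y)) := by
        rw [map_sub]; module
      rw [this]
      simp only [ContinuousLinearMap.sub_apply, ContinuousLinearMap.coe_smul',
        Pi.smul_apply, LinearIsometryEquiv.coe_coe, toDual_apply_apply, smul_eq_mul,
        real_inner_self_eq_norm_sq]
    have hnormh : ∀ x y : V, ‖h' x - h' y‖^2
        = ‖g' x - g' y‖^2 - 2*μ*((g' x - g' y) (x - y)) + μ^2 * ‖x - y‖^2 := by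
      intro x y
      set v := (toDual ℝ V).symm (g' x - g' y) with hv
      have hvn : ‖v‖ = ‖g' x - g' y‖ := LinearIsometryEquiv.norm_map _ _
      have hvap : ⟪v, x - y⟫_ℝ = (g' x - g' y) (x - y) := toDual_symm_apply
      have heq : h' x - h' y = toDual ℝ V (v - μ • (x - y)) := by
        ext w
        simp only [hh', hv, ContinuousLinearMap.sub_apply, ContinuousLinearMap.coe_smul',
          Pi.smul_apply, LinearIsometryEquiv.coe_coe, toDual_apply_apply, smul_eq_mul,
          inner_sub_left, inner_smul_left, conj_trivial, toDual_symm_apply]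
        ring
      rw [heq, LinearIsometryEquiv.norm_map]
      rw [norm_sub_sq_real, hvn, inner_smul_right, hvap, norm_smul]
      rw [mul_pow, Real.norm_eq_abs, abs_of_pos hμ]
      ring
    -- h' is monotone
    have hmonoh : ∀ x y : V, 0 ≤ (h' x - h' y) (x - y) := by
      intro x y
      rw [happ]
      linarith [hmono x y]
    -- descent inequality for h with constant C, via gradient inequality for q = C/2‖·‖² - h
    set q : V → ℝ := fun x => (C/2) * ‖x‖^2 - h x with hq
    set q' : V → StrongDual ℝ V := fun x => C • (toDual ℝ V x) - h' x with hq'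
    have hqd : ∀ x, HasFDerivAt q (q' x) x := by
      intro x
      have hsq : HasFDerivAt (fun x : V => (C/2) * ‖x‖^2) (C • (toDual ℝ V x)) x := by
        have h0 : HasFDerivAt (fun x : V => (C/2) * ‖x‖^2) ((C/2) • (2 • innerSL ℝ x)) x :=
          ((hasStrictFDerivAt_norm_sq x).hasFDerivAt).const_mul (C/2)
        convert h0 using 1
        ext y
        simp [two_smul, toDual_apply_apply, innerSL_apply_apply, smul_smul]
        ring
      exact hsq.sub (hhd x)
    have hmonoq : ∀ x y : V, 0 ≤ (q' x - q' y) (x - y) := by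
      intro x y
      have hxy : ⟪x, x - y⟫_ℝ - ⟪y, x - y⟫_ℝ = ‖x - y‖^2 := by
        rw [← inner_sub_left, real_inner_self_eq_norm_sq]
      have e : (q' x - q' y) (x - y) = C * ‖x - y‖^2 - (h' x - h' y) (x - y) := by
        simp only [hq', ContinuousLinearMap.sub_apply, ContinuousLinearMap.coe_smul',
          Pi.smul_apply, LinearIsometryEquiv.coe_coe, toDual_apply_apply, smul_eq_mul]
        rw [← hxy]
        ring
      rw [e, happ]
      have := hCS x y
      have := hLip x y
      nlinarith [norm_nonneg (x - y)]
    have hdesc : ∀ x y : V, h y ≤ h x + h' x (y - x) + (C/2) * ‖y - x‖^2 := by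
      intro x y
      have := grad_ineq_of_monotone q q' hqd hmonoq x y
      simp only [hq, hq'] at this
      have e : (C • (toDual ℝ V) x - h' x) (y - x)
          = C * ⟪x, y - x⟫_ℝ - h' x (y - x) := by simp [toDual_apply_apply]
      rw [e] at this
      have e2 : ‖y - x‖^2 = ‖y‖^2 - 2*⟪x, y - x⟫_ℝ - ‖x‖^2 := by
        simp only [← real_inner_self_eq_norm_sq, inner_sub_left, inner_sub_right]
        linarith [real_inner_comm x y]
      rw [e2]
      linarith
    -- cocoercivity of h'
    have hco : ∀ x y : V, (1/C) * ‖h' x - h' y‖^2 ≤ (h' x - h' y) (x - y) := by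
      intro x y
      have h1 := baillon_haddad_onesided h h' hhd hmonoh C hC0 hdesc x y
      have h2 := baillon_haddad_onesided h h' hhd hmonoh C hC0 hdesc y x
      have e1 : h' x (y - x) = - h' x (x - y) := by
        rw [show y - x = -(x-y) by abel]; simp
      have e2 : ‖h' x - h' y‖ = ‖h' y - h' x‖ := by rw [← norm_neg]; simp
      have e3 : (h' x - h' y) (x - y) = h' x (x - y) - h' y (x - y) := by simp
      rw [e1] at h1
      have e4 : ‖h' y - h' x‖ = ‖h' x - h' y‖ := norm_sub_rev _ _
      rw [e4] at h1
      rw [e3]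
      have hhalf : 1/C * ‖h' x - h' y‖^2
          = 1/(2*C) * ‖h' x - h' y‖^2 + 1/(2*C) * ‖h' x - h' y‖^2 := by
        have hCne : C ≠ 0 := ne_of_gt hC0
        field_simp
        ring
      linarith [h1, h2, hhalf]
    -- conclude
    have hfin := hco x₁ x₂
    rw [hnormh, happ] at hfin
    set d := x₁ - x₂
    set p := (g' x₁ - g' x₂) d
    have e : μ * L / (μ + L) * ‖d‖ ^ 2 + 1 / (μ + L) * ‖g' x₁ - g' x₂‖ ^ 2
        = (μ * L * ‖d‖ ^ 2 + ‖g' x₁ - g' x₂‖ ^ 2) / (μ + L) := by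
      field_simp
    rw [e, div_le_iff₀ hμL0]
    have hfin' : (‖g' x₁ - g' x₂‖ ^ 2 - 2 * μ * p + μ ^ 2 * ‖d‖ ^ 2) / C ≤ p - μ * ‖d‖ ^ 2 := by
      rw [div_eq_inv_mul]
      simpa [one_div] using hfin
    rw [div_le_iff₀ hC0] at hfin'
    rw [hC] at hfin'
    nlinarith [hfin']
end

section
/- Let V be a Hilbert space, g : V → ℝ convex and Fréchet differentiable with A := g′ being μ_A-strongly monotone and L_A-Lipschitz, and let Φ : V → V be L_Φ-Lipschitz with L_Φ < 2√(μ_A L_A)/(μ_A + L_A). Then B := A ∘ (I − Φ)^{-1} is strongly monotone with constant μ_B = (4μ_A L_A − L_Φ²(μ_A + L_A)²)/(4(μ_A + L_A)(1 + L_Φ)²). -/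
open InnerProductSpace


-- quadratic upper bound (descent lemma)
theorem my_quad_upper {V : Type*} [NormedAddCommGroup V] [InnerProductSpace ℝ V]
    (g : V → ℝ) (A : V → StrongDual ℝ V)
    (hderiv : ∀ x : V, HasFDerivAt g (A x) x) (L : ℝ)
    (hALip : ∀ y₁ y₂ : V, ‖A y₁ - A y₂‖ ≤ L * ‖y₁ - y₂‖) :
    ∀ x y : V, g y ≤ g x + A x (y - x) + L / 2 * ‖y - x‖ ^ 2 := by
  intro x y
  set d := y - x with hd
  set ψ : ℝ → ℝ := fun t => g (x + t • d) - t * A x d - L / 2 * ‖d‖ ^ 2 * t ^ 2 with hψ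
  have hline : ∀ t : ℝ, HasDerivAt (fun s : ℝ => x + s • d) d t := by
    intro t
    simpa using ((hasDerivAt_id t).smul_const d).const_add x
  have hψ' : ∀ t : ℝ, HasDerivAt ψ ((A (x + t • d)) d - A x d - L * ‖d‖ ^ 2 * t) t := by
    intro t
    have h1 : HasDerivAt (fun s : ℝ => g (x + s • d)) (A (x + t • d) d) t := by
      exact (hderiv (x + t • d)).comp_hasDerivAt t (hline t)
    have h2 : HasDerivAt (fun s : ℝ => s * A x d) (A x d) t := by
      simpa using (hasDerivAt_id t).mul_const (A x d)
    have h3 : HasDerivAt (fun s : ℝ => L / 2 * ‖d‖ ^ 2 * s ^ 2) (L * ‖d‖ ^ 2 * t) t := by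
      have := (hasDerivAt_pow 2 t).const_mul (L / 2 * ‖d‖ ^ 2)
      refine this.congr_deriv ?_
      ring
    exact (h1.sub h2).sub h3
  have hanti : AntitoneOn ψ (Set.Icc 0 1) := by
    apply antitoneOn_of_deriv_nonpos (convex_Icc 0 1)
    · exact fun t _ => ((hψ' t).differentiableAt).continuousAt.continuousWithinAt
    · exact fun t _ => ((hψ' t).differentiableAt).differentiableWithinAt
    · intro t ht
      rw [interior_Icc] at ht
      rw [(hψ' t).deriv]
      have h1 : A (x + t • d) d - A x d = (A (x + t • d) - A x) d := by simp
      have h2 : (A (x + t • d) - A x) d ≤ ‖A (x + t • d) - A x‖ * ‖d‖ :=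
        le_trans (le_abs_self _) ((A (x + t • d) - A x).le_opNorm d)
      have h3 : ‖A (x + t • d) - A x‖ ≤ L * ‖t • d‖ := by
        simpa using hALip (x + t • d) x
      have h4 : ‖t • d‖ = t * ‖d‖ := by
        rw [norm_smul, Real.norm_eq_abs, abs_of_pos ht.1]
      have h5 : ‖A (x + t • d) - A x‖ * ‖d‖ ≤ L * (t * ‖d‖) * ‖d‖ := by
        rw [h4] at h3
        exact mul_le_mul_of_nonneg_right h3 (norm_nonneg d)
      nlinarith [h1, h2, h5]
  have h01 := hanti (Set.left_mem_Icc.2 zero_le_one) (Set.right_mem_Icc.2 zero_le_one) zero_le_one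
  have e0 : ψ 0 = g x := by simp [hψ]
  have e1 : ψ 1 = g y - A x d - L / 2 * ‖d‖ ^ 2 := by
    simp [hψ, hd]
  rw [e0, e1] at h01
  linarith

-- quadratic lower bound (strong convexity)
theorem my_quad_lower {V : Type*} [NormedAddCommGroup V] [InnerProductSpace ℝ V]
    (g : V → ℝ) (A : V → StrongDual ℝ V)
    (hderiv : ∀ x : V, HasFDerivAt g (A x) x) (μ : ℝ)
    (hAmono : ∀ y₁ y₂ : V, μ * ‖y₁ - y₂‖ ^ 2 ≤ (A y₁ - A y₂) (y₁ - y₂)) :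
    ∀ x y : V, g x + A x (y - x) + μ / 2 * ‖y - x‖ ^ 2 ≤ g y := by
  intro x y
  set d := y - x with hd
  set ψ : ℝ → ℝ := fun t => g (x + t • d) - t * A x d - μ / 2 * ‖d‖ ^ 2 * t ^ 2 with hψ
  have hline : ∀ t : ℝ, HasDerivAt (fun s : ℝ => x + s • d) d t := by
    intro t
    simpa using ((hasDerivAt_id t).smul_const d).const_add x
  have hψ' : ∀ t : ℝ, HasDerivAt ψ ((A (x + t • d)) d - A x d - μ * ‖d‖ ^ 2 * t) t := by
    intro t
    have h1 : HasDerivAt (fun s : ℝ => g (x + s • d)) (A (x + t • d) d) t := by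
      exact (hderiv (x + t • d)).comp_hasDerivAt t (hline t)
    have h2 : HasDerivAt (fun s : ℝ => s * A x d) (A x d) t := by
      simpa using (hasDerivAt_id t).mul_const (A x d)
    have h3 : HasDerivAt (fun s : ℝ => μ / 2 * ‖d‖ ^ 2 * s ^ 2) (μ * ‖d‖ ^ 2 * t) t := by
      have := (hasDerivAt_pow 2 t).const_mul (μ / 2 * ‖d‖ ^ 2)
      refine this.congr_deriv ?_
      ring
    exact (h1.sub h2).sub h3
  have hmono : MonotoneOn ψ (Set.Icc 0 1) := by
    apply monotoneOn_of_deriv_nonneg (convex_Icc 0 1)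
    · exact fun t _ => ((hψ' t).differentiableAt).continuousAt.continuousWithinAt
    · exact fun t _ => ((hψ' t).differentiableAt).differentiableWithinAt
    · intro t ht
      rw [interior_Icc] at ht
      rw [(hψ' t).deriv]
      have h1 := hAmono (x + t • d) x
      have h2 : (x + t • d) - x = t • d := by abel
      rw [h2] at h1
      have h3 : (A (x + t • d) - A x) (t • d) = t * ((A (x + t • d) - A x) d) := by
        rw [map_smul]; simp
      have h4 : ‖t • d‖ = t * ‖d‖ := by
        rw [norm_smul, Real.norm_eq_abs, abs_of_pos ht.1]
      rw [h3, h4] at h1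
      have h5 : (A (x + t • d) - A x) d = A (x + t • d) d - A x d := by simp
      have h6 : μ * t * ‖d‖ ^ 2 ≤ (A (x + t • d) - A x) d := by
        have := ht.1
        nlinarith [ht.1]
      rw [h5] at h6
      nlinarith
  have h01 := hmono (Set.left_mem_Icc.2 zero_le_one) (Set.right_mem_Icc.2 zero_le_one) zero_le_one
  have e0 : ψ 0 = g x := by simp [hψ]
  have e1 : ψ 1 = g y - A x d - μ / 2 * ‖d‖ ^ 2 := by
    simp [hψ, hd]
  rw [e0, e1] at h01
  linarith

theorem my_interp {V : Type*} [NormedAddCommGroup V] [InnerProductSpace ℝ V] [CompleteSpace V]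
    (g : V → ℝ) (A : V → StrongDual ℝ V)
    (hderiv : ∀ x : V, HasFDerivAt g (A x) x) (μ L : ℝ) (hμ : 0 < μ) (hμL : μ ≤ L)
    (hAmono : ∀ y₁ y₂ : V, μ * ‖y₁ - y₂‖ ^ 2 ≤ (A y₁ - A y₂) (y₁ - y₂))
    (hALip : ∀ y₁ y₂ : V, ‖A y₁ - A y₂‖ ≤ L * ‖y₁ - y₂‖) :
    ∀ x z : V, μ * L * ‖x - z‖ ^ 2 + ‖A x - A z‖ ^ 2 ≤ (μ + L) * ((A x - A z) (x - z)) := by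
  intro x z
  rcases eq_or_lt_of_le hμL with heq | hlt
  · -- μ = L
    have h1 := hAmono x z
    have h2 := hALip x z
    subst heq
    nlinarith [norm_nonneg (x - z), norm_nonneg (A x - A z), sq_nonneg (‖A x - A z‖ - μ * ‖x - z‖)]
  · set K : ℝ := L - μ with hKdef
    have hK : 0 < K := by linarith
    -- key inequality
    have key : ∀ p q : V,
        g q + A q (p - q) + μ / 2 * ‖p - q‖ ^ 2
          + 1 / (2 * K) * ‖(toDual ℝ V).symm (A p - A q) - μ • (p - q)‖ ^ 2 ≤ g p := by
      intro p q
      set w : V := (toDual ℝ V).symm (A p - A q) - μ • (p - q) with hwdef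
      have hw : ∀ v : V, ⟪w, v⟫_ℝ = (A p - A q) v - μ * ⟪p - q, v⟫_ℝ := by
        intro v
        rw [hwdef, inner_sub_left, real_inner_smul_left, toDual_symm_apply]
      set yy : V := p - K⁻¹ • w with hyydef
      have I1 := my_quad_lower g A hderiv μ hAmono q yy
      have I2 := my_quad_upper g A hderiv L hALip p yy
      -- expansions
      have e1 : yy - p = -(K⁻¹ • w) := by rw [hyydef]; abel
      have e2 : yy - q = (p - q) - K⁻¹ • w := by rw [hyydef]; abel
      have e3 : A p (yy - p) = -(K⁻¹ * A p w) := by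
        rw [e1, map_neg, map_smul]; simp
      have e4 : A q (yy - q) = A q (p - q) - K⁻¹ * A q w := by
        rw [e2, map_sub, map_smul]; simp
      have e5 : ‖yy - p‖ ^ 2 = K⁻¹ ^ 2 * ‖w‖ ^ 2 := by
        rw [e1, norm_neg, norm_smul, mul_pow, Real.norm_eq_abs, sq_abs]
      have e6 : ‖yy - q‖ ^ 2 = ‖p - q‖ ^ 2 - 2 * (K⁻¹ * ⟪p - q, w⟫_ℝ) + K⁻¹ ^ 2 * ‖w‖ ^ 2 := by
        rw [e2, norm_sub_sq_real, real_inner_smul_right, norm_smul, mul_pow,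
          Real.norm_eq_abs, sq_abs]
      have e7 : ⟪w, w⟫_ℝ = (A p w - A q w) - μ * ⟪p - q, w⟫_ℝ := by
        rw [hw w]; simp
      have e8 : ⟪w, w⟫_ℝ = ‖w‖ ^ 2 := real_inner_self_eq_norm_sq w
      have e9 : ⟪p - q, w⟫_ℝ = ⟪w, p - q⟫_ℝ := real_inner_comm _ _
      have hKK : K * K⁻¹ = 1 := mul_inv_cancel₀ (ne_of_gt hK)
      rw [e3, e5] at I2
      rw [e4, e6] at I1
      have e7' : K⁻¹ * (A p w) - K⁻¹ * (A q w) - K⁻¹ * (μ * ⟪p - q, w⟫_ℝ)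
          = K⁻¹ * ‖w‖ ^ 2 := by
        linear_combination K⁻¹ * (e7.symm.trans e8)
      have hLK : L / 2 * (K⁻¹ ^ 2 * ‖w‖ ^ 2)
          = μ / 2 * (K⁻¹ ^ 2 * ‖w‖ ^ 2) + 1 / 2 * K⁻¹ * ‖w‖ ^ 2 := by
        rw [hKdef]
        field_simp
        ring
      have h10 : 1 / (2 * K) * ‖w‖ ^ 2 = 1 / 2 * K⁻¹ * ‖w‖ ^ 2 := by
        field_simp
      linarith [I1, I2, e7', hLK, h10]
    -- apply key both ways
    have k1 := key x z
    have k2 := key z x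
    have hwsym : (toDual ℝ V).symm (A z - A x) - μ • (z - x)
        = -((toDual ℝ V).symm (A x - A z) - μ • (x - z)) := by
      rw [map_sub, map_sub]
      module
    rw [hwsym, norm_neg] at k2
    set w : V := (toDual ℝ V).symm (A x - A z) - μ • (x - z) with hwdef
    have hnormw : ‖w‖ ^ 2 = ‖A x - A z‖ ^ 2 - 2 * μ * ((A x - A z) (x - z)) + μ ^ 2 * ‖x - z‖ ^ 2 := by
      rw [hwdef, norm_sub_sq_real, real_inner_smul_right, toDual_symm_apply,
        norm_smul, mul_pow, Real.norm_eq_abs, sq_abs,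
        LinearIsometryEquiv.norm_map]
      ring
    have hax : A x (z - x) = -(A x (x - z)) := by
      have : z - x = -(x - z) := by abel
      rw [this, map_neg]
    have haz : (A x - A z) (x - z) = A x (x - z) - A z (x - z) := by simp
    have hne : (x - z) = -(z - x) := by abel
    have hnorm2 : ‖z - x‖ = ‖x - z‖ := by rw [hne, norm_neg]
    rw [hnorm2] at k2
    rw [hax] at k2
    -- from k1 + k2 : (A x - A z)(x-z) ≥ μ n² + K⁻¹ ‖w‖²
    have hKK : K * K⁻¹ = 1 := mul_inv_cancel₀ (ne_of_gt hK)
    have hS : μ * ‖x - z‖ ^ 2 + 1 / K * ‖w‖ ^ 2 ≤ (A x - A z) (x - z) := by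
      rw [haz]
      have h12 : 1 / (2 * K) * ‖w‖ ^ 2 + 1 / (2 * K) * ‖w‖ ^ 2 = 1 / K * ‖w‖ ^ 2 := by
        field_simp
        ring
      linarith [k1, k2]
    have h1 : 1 / K * ‖w‖ ^ 2 ≤ (A x - A z) (x - z) - μ * ‖x - z‖ ^ 2 := by linarith
    have h2 : K * (1 / K * ‖w‖ ^ 2) ≤ K * ((A x - A z) (x - z) - μ * ‖x - z‖ ^ 2) :=
      mul_le_mul_of_nonneg_left h1 hK.le
    have h3 : K * (1 / K * ‖w‖ ^ 2) = ‖w‖ ^ 2 := by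
      field_simp
    rw [h3, hKdef] at h2
    nlinarith [h2, hnormw]

theorem composition_strongly_monotone_potential
    {V : Type*} [NormedAddCommGroup V] [InnerProductSpace ℝ V] [CompleteSpace V]
    (g : V → ℝ) (A : V → StrongDual ℝ V) (Φ : V → V)
    (hconv : ConvexOn ℝ Set.univ g)
    (hderiv : ∀ x : V, HasFDerivAt g (A x) x)
    (μA LA LΦ : ℝ) (hμA : 0 < μA) (hμL : μA ≤ LA)
    (hAmono : ∀ y₁ y₂ : V, μA * ‖y₁ - y₂‖ ^ 2 ≤ (A y₁ - A y₂) (y₁ - y₂))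
    (hALip : ∀ y₁ y₂ : V, ‖A y₁ - A y₂‖ ≤ LA * ‖y₁ - y₂‖)
    (hΦ0 : 0 ≤ LΦ) (hΦ : LΦ < 2 * Real.sqrt (μA * LA) / (μA + LA))
    (hΦLip : ∀ y₁ y₂ : V, ‖Φ y₁ - Φ y₂‖ ≤ LΦ * ‖y₁ - y₂‖) :
    ∀ y₁ y₂ : V,
      (4 * μA * LA - LΦ ^ 2 * (μA + LA) ^ 2) / (4 * (μA + LA) * (1 + LΦ) ^ 2)
          * ‖y₁ - y₂‖ ^ 2 ≤
        (A (Function.invFun (fun y : V => y - Φ y) y₁) -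
         A (Function.invFun (fun y : V => y - Φ y) y₂)) (y₁ - y₂) := by
  have hLA : 0 < LA := lt_of_lt_of_le hμA hμL
  have hμLA : 0 < μA + LA := by linarith
  have hsqrt : Real.sqrt (μA * LA) ^ 2 = μA * LA :=
    Real.sq_sqrt (by positivity)
  have hamgm : 2 * Real.sqrt (μA * LA) ≤ μA + LA := by
    nlinarith [sq_nonneg (Real.sqrt μA - Real.sqrt LA), Real.sq_sqrt hμA.le,
      Real.sq_sqrt hLA.le, Real.sqrt_mul hμA.le LA,
      Real.sqrt_nonneg μA, Real.sqrt_nonneg LA]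
  have hLlt1 : LΦ < 1 := by
    have := (div_le_one hμLA).2 hamgm
    linarith
  have hnum : LΦ ^ 2 * (μA + LA) ^ 2 < 4 * μA * LA := by
    have h1 : LΦ * (μA + LA) < 2 * Real.sqrt (μA * LA) :=
      (lt_div_iff₀ hμLA).1 hΦ
    nlinarith [Real.sqrt_nonneg (μA * LA), mul_nonneg hΦ0 hμLA.le]
  -- surjectivity of T = I - Φ
  have hsurj : ∀ b : V, (fun y : V => y - Φ y) (Function.invFun (fun y : V => y - Φ y) b) = b := by
    intro b
    set K : NNReal := ⟨LΦ, hΦ0⟩ with hK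
    have hlip : LipschitzWith K (fun x => Φ x + b) := by
      apply LipschitzWith.of_dist_le_mul
      intro p q
      simp only [dist_eq_norm, add_sub_add_right_eq_sub]
      exact hΦLip p q
    have hc : ContractingWith K (fun x => Φ x + b) := ⟨by exact_mod_cast hLlt1, hlip⟩
    have hfix := ContractingWith.fixedPoint_isFixedPt hc
    simp only [Function.IsFixedPt] at hfix
    refine Function.invFun_eq (f := fun y : V => y - Φ y) ⟨ContractingWith.fixedPoint (fun x => Φ x + b) hc, ?_⟩
    nth_rewrite 1 [← hfix]
    abel
  intro y₁ y₂
  set x₁ := Function.invFun (fun y : V => y - Φ y) y₁ with hx1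
  set x₂ := Function.invFun (fun y : V => y - Φ y) y₂ with hx2
  have e₁ : x₁ - Φ x₁ = y₁ := hsurj y₁
  have e₂ : x₂ - Φ x₂ = y₂ := hsurj y₂
  have hinterp := my_interp g A hderiv μA LA hμA hμL hAmono hALip x₁ x₂
  have hyx : y₁ - y₂ = (x₁ - x₂) - (Φ x₁ - Φ x₂) := by
    rw [← e₁, ← e₂]; abel
  have hm : ‖y₁ - y₂‖ ≤ (1 + LΦ) * ‖x₁ - x₂‖ := by
    rw [hyx]
    calc ‖(x₁ - x₂) - (Φ x₁ - Φ x₂)‖ ≤ ‖x₁ - x₂‖ + ‖Φ x₁ - Φ x₂‖ := norm_sub_le _ _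
      _ ≤ ‖x₁ - x₂‖ + LΦ * ‖x₁ - x₂‖ := by linarith [hΦLip x₁ x₂]
      _ = (1 + LΦ) * ‖x₁ - x₂‖ := by ring
  have happ : (A x₁ - A x₂) (y₁ - y₂)
      = (A x₁ - A x₂) (x₁ - x₂) - (A x₁ - A x₂) (Φ x₁ - Φ x₂) := by
    rw [hyx, map_sub]
  have hbound : (A x₁ - A x₂) (Φ x₁ - Φ x₂) ≤ ‖A x₁ - A x₂‖ * (LΦ * ‖x₁ - x₂‖) := by
    calc (A x₁ - A x₂) (Φ x₁ - Φ x₂) ≤ ‖A x₁ - A x₂‖ * ‖Φ x₁ - Φ x₂‖ :=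
          le_trans (le_abs_self _) ((A x₁ - A x₂).le_opNorm _)
      _ ≤ ‖A x₁ - A x₂‖ * (LΦ * ‖x₁ - x₂‖) :=
          mul_le_mul_of_nonneg_left (hΦLip x₁ x₂) (norm_nonneg _)
  set n := ‖x₁ - x₂‖ with hn
  set a := ‖A x₁ - A x₂‖ with ha
  set m := ‖y₁ - y₂‖ with hmm
  have hm2 : m ^ 2 ≤ (1 + LΦ) ^ 2 * n ^ 2 := by
    nlinarith [norm_nonneg (y₁ - y₂), norm_nonneg (x₁ - x₂), hm]
  have step1 : (4 * μA * LA - LΦ ^ 2 * (μA + LA) ^ 2) * n ^ 2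
      ≤ 4 * (μA + LA) * ((A x₁ - A x₂) (y₁ - y₂)) := by
    have hb4 : 4 * (μA + LA) * ((A x₁ - A x₂) (Φ x₁ - Φ x₂))
        ≤ 4 * (μA + LA) * (a * (LΦ * n)) :=
      mul_le_mul_of_nonneg_left hbound (by positivity)
    nlinarith [hinterp, happ, hb4, sq_nonneg (2 * a - LΦ * (μA + LA) * n)]
  rw [div_mul_eq_mul_div, div_le_iff₀ (by positivity)]
  have hnum0 : 0 ≤ 4 * μA * LA - LΦ ^ 2 * (μA + LA) ^ 2 := by linarith
  linarith [mul_le_mul_of_nonneg_left hm2 hnum0,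
    mul_le_mul_of_nonneg_right step1 (sq_nonneg (1 + LΦ))]
end

section
/- Let 0 < μ_A < L_A, set c_A := √(L_A² − μ_A²), L_Φ := μ_A / L_A, A := [[μ_A, −c_A], [c_A, μ_A]], x := (1,0), y := A x = (μ_A, c_A), and Φ := (L_Φ/L_A) · y xᵀ. Then Φ is L_Φ-Lipschitz, I − Φ is invertible, z := (I − Φ)x ≠ 0, and zᵀ A (I − Φ)^{-1} z = 0; in particular, A (I − Φ)^{-1} is not coercive. -/
open Matrix

theorem sharpness_general_bound
    (μA LA : ℝ) (hμ : 0 < μA) (hL : μA < LA) :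
    let cA := Real.sqrt (LA ^ 2 - μA ^ 2)
    let LΦ := μA / LA
    let A : Matrix (Fin 2) (Fin 2) ℝ := !![μA, -cA; cA, μA]
    let x : Fin 2 → ℝ := ![1, 0]
    let y : Fin 2 → ℝ := ![μA, cA]
    let Φ : Matrix (Fin 2) (Fin 2) ℝ := (LΦ / LA) • vecMulVec y x
    let z : Fin 2 → ℝ := (1 - Φ).mulVec x
    (∀ w : EuclideanSpace ℝ (Fin 2),
        ‖Matrix.toEuclideanLin (𝕜 := ℝ) Φ w‖ ≤ LΦ * ‖w‖) ∧
    IsUnit (1 - Φ) ∧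
    z ≠ 0 ∧
    z ⬝ᵥ (A * (1 - Φ)⁻¹).mulVec z = 0 ∧
    ¬ ∃ c : ℝ, 0 < c ∧ ∀ w : Fin 2 → ℝ,
        c * (w ⬝ᵥ w) ≤ w ⬝ᵥ (A * (1 - Φ)⁻¹).mulVec w := by
  intro cA LΦ A x y Φ z
  have hLpos : 0 < LA := hμ.trans hL
  have hc2 : cA ^ 2 = LA ^ 2 - μA ^ 2 := Real.sq_sqrt (by nlinarith)
  have hcpos : 0 < cA := Real.sqrt_pos.mpr (by nlinarith)
  -- entries of 1 - Φ
  have hΦ : Φ = !![μA / LA / LA * μA, 0; μA / LA / LA * cA, 0] := by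
    show (μA / LA / LA) • vecMulVec y x = _
    ext i j
    fin_cases i <;> fin_cases j <;>
      simp [vecMulVec, y, x, mul_comm]
  have h1Φ : (1 : Matrix (Fin 2) (Fin 2) ℝ) - Φ =
      !![1 - μA / LA / LA * μA, 0; -(μA / LA / LA * cA), 1] := by
    rw [hΦ]
    ext i j
    fin_cases i <;> fin_cases j <;>
      simp [Matrix.one_apply]
  -- invertibility
  have hdet : ((1 : Matrix (Fin 2) (Fin 2) ℝ) - Φ).det = 1 - μA / LA / LA * μA := by
    rw [h1Φ, Matrix.det_fin_two_of]; ring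
  have hdetpos : (0:ℝ) < 1 - μA / LA / LA * μA := by
    have : μA / LA / LA * μA = μA ^ 2 / LA ^ 2 := by ring
    rw [this]
    have h1 : μA ^ 2 / LA ^ 2 < 1 := by
      rw [div_lt_one (by positivity)]; nlinarith
    linarith
  have hunit : IsUnit ((1 : Matrix (Fin 2) (Fin 2) ℝ) - Φ) := by
    rw [Matrix.isUnit_iff_isUnit_det, hdet]
    exact (hdetpos.ne').isUnit
  -- z
  have hz : z = ![1 - μA / LA / LA * μA, -(μA / LA / LA * cA)] := by
    show (1 - Φ).mulVec x = _
    rw [h1Φ]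
    ext i
    fin_cases i <;> simp [Matrix.mulVec, dotProduct, x]
  have hzne : z ≠ 0 := by
    rw [hz]
    intro h
    have h0 : (1 : ℝ) - μA / LA / LA * μA = 0 := by
      have := congrFun h 0
      simpa using this
    linarith
  -- (1-Φ)⁻¹ z = x
  have hinvz : ((1 : Matrix (Fin 2) (Fin 2) ℝ) - Φ)⁻¹.mulVec z = x := by
    show (1 - Φ)⁻¹.mulVec ((1 - Φ).mulVec x) = x
    rw [Matrix.mulVec_mulVec, Matrix.nonsing_inv_mul _ (by
      rw [← Matrix.isUnit_iff_isUnit_det]; exact hunit), Matrix.one_mulVec]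
  have hkey : z ⬝ᵥ (A * (1 - Φ)⁻¹).mulVec z = 0 := by
    rw [← Matrix.mulVec_mulVec, hinvz]
    have hAx : A.mulVec x = y := by
      ext i
      fin_cases i <;> simp [A, Matrix.mulVec, dotProduct, x, y]
    rw [hAx, hz]
    show (1 - μA / LA / LA * μA) * μA + (-(μA / LA / LA * cA) * cA + 0) = 0
    have hL0 : LA ≠ 0 := ne_of_gt ‹0 < LA›
    field_simp
    linear_combination (-μA) * hc2
  refine ⟨?_, hunit, hzne, hkey, ?_⟩
  · -- Lipschitz bound
    intro w
    have hval : (Matrix.toEuclideanLin (𝕜 := ℝ) Φ w : EuclideanSpace ℝ (Fin 2)) =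
        (WithLp.equiv 2 _).symm (Φ.mulVec ((WithLp.equiv 2 _) w)) := by
      rfl
    have hn : ‖w‖ = Real.sqrt (w 0 ^ 2 + w 1 ^ 2) := by
      rw [EuclideanSpace.norm_eq]
      congr 1
      simp [Fin.sum_univ_two, sq_abs]
    have hw0 : |w 0| ≤ ‖w‖ := by
      rw [hn, ← Real.sqrt_sq_eq_abs]
      exact Real.sqrt_le_sqrt (by nlinarith [sq_nonneg (w 1)])
    have hΦw : Φ.mulVec ((WithLp.equiv 2 _) w) =
        ![μA / LA / LA * μA * w 0, μA / LA / LA * cA * w 0] := by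
      rw [hΦ]
      ext i
      fin_cases i <;> simp [Matrix.mulVec, dotProduct]
    rw [hval, hΦw]
    rw [EuclideanSpace.norm_eq]
    have hsum : ∑ i : Fin 2, ‖(WithLp.equiv 2 (Fin 2 → ℝ)).symm
        ![μA / LA / LA * μA * w 0, μA / LA / LA * cA * w 0] i‖ ^ 2 =
        (μA / LA) ^ 2 * w 0 ^ 2 := by
      rw [Fin.sum_univ_two]
      simp only [WithLp.equiv_symm_apply, PiLp.toLp_apply]
      rw [Real.norm_eq_abs, Real.norm_eq_abs, sq_abs, sq_abs]
      show (μA / LA / LA * μA * w 0) ^ 2 + (μA / LA / LA * cA * w 0) ^ 2 = _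
      have hL0 : LA ≠ 0 := ne_of_gt hLpos
      field_simp
      linear_combination (w 0 ^ 2) * hc2
    rw [hsum]
    have h1 : Real.sqrt ((μA / LA) ^ 2 * w 0 ^ 2) = (μA / LA) * |w 0| := by
      rw [Real.sqrt_mul (by positivity), Real.sqrt_sq (by positivity),
        Real.sqrt_sq_eq_abs]
    rw [h1]
    have : (0:ℝ) ≤ μA / LA := by positivity
    exact mul_le_mul_of_nonneg_left hw0 this
  · -- not coercive
    rintro ⟨c, hc, hcoer⟩
    have h := hcoer z
    rw [hkey] at h
    have hzz : 0 < z ⬝ᵥ z := by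
      rw [hz]
      show 0 < (1 - μA / LA / LA * μA) * (1 - μA / LA / LA * μA) +
        (-(μA / LA / LA * cA) * -(μA / LA / LA * cA) + 0)
      nlinarith [hdetpos]
    nlinarith
end

section
/- Let V be a Hilbert space, K ⊆ V nonempty closed convex, A : V → V* μ_A-strongly monotone and L_A-Lipschitz, and Φ : V → V L_Φ-Lipschitz with L_Φ < μ_A/L_A. Then for every f ∈ V* the quasi-variational inequality 'find y ∈ K + Φ(y) with ⟨A(y) − f, v − y⟩ ≥ 0 for all v ∈ K + Φ(y)' has a unique solution, and the solution map f ↦ y is Lipschitz continuous from V* to V. -/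
set_option maxHeartbeats 1000000

open RealInnerProductSpace

theorem qvi_existence_uniqueness_lipschitz
    {V : Type*} [NormedAddCommGroup V] [InnerProductSpace ℝ V] [CompleteSpace V]
    (K : Set V) (hK : K.Nonempty) (hKc : IsClosed K) (hKconv : Convex ℝ K)
    (A : V → StrongDual ℝ V) (Φ : V → V)
    (μA LA LΦ : ℝ) (hμA : 0 < μA) (hμL : μA ≤ LA)
    (hAmono : ∀ y₁ y₂ : V, μA * ‖y₁ - y₂‖ ^ 2 ≤ (A y₁ - A y₂) (y₁ - y₂))
    (hALip : ∀ y₁ y₂ : V, ‖A y₁ - A y₂‖ ≤ LA * ‖y₁ - y₂‖)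
    (hΦ0 : 0 ≤ LΦ) (hΦ : LΦ < μA / LA)
    (hΦLip : ∀ y₁ y₂ : V, ‖Φ y₁ - Φ y₂‖ ≤ LΦ * ‖y₁ - y₂‖) :
    ∃ S : StrongDual ℝ V → V,
      (∀ f : StrongDual ℝ V,
        (S f ∈ (fun k => k + Φ (S f)) '' K ∧
          ∀ v ∈ (fun k => k + Φ (S f)) '' K, 0 ≤ (A (S f) - f) (v - S f)) ∧
        (∀ y : V,
          (y ∈ (fun k => k + Φ y) '' K ∧
            ∀ v ∈ (fun k => k + Φ y) '' K, 0 ≤ (A y - f) (v - y)) → y = S f)) ∧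
      ∃ C : ℝ, ∀ f₁ f₂ : StrongDual ℝ V,
        ‖S f₁ - S f₂‖ ≤ C * ‖f₁ - f₂‖ := by
  classical
  have hLA : (0:ℝ) < LA := lt_of_lt_of_le hμA hμL
  have hLΦ1 : LΦ < 1 := lt_of_lt_of_le hΦ (by rw [div_le_one hLA]; exact hμL)
  have h1Φ : (0:ℝ) < 1 - LΦ := by linarith
  have hμB : (0:ℝ) < μA - LA * LΦ := by
    have h := (lt_div_iff₀ hLA).1 hΦ
    nlinarith
  set m : ℝ := (μA - LA * LΦ) / (1 + LΦ) ^ 2 with hm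
  have h1Φ' : (0:ℝ) < 1 + LΦ := by linarith
  have hmpos : 0 < m := div_pos hμB (by positivity)
  set L : ℝ := LA / (1 - LΦ) with hLdef
  have hLpos : 0 < L := div_pos hLA h1Φ
  -- the metric projection onto K
  obtain ⟨P, hPmem, hPchar⟩ :
      ∃ P : V → V, (∀ x, P x ∈ K) ∧ ∀ x, ∀ k ∈ K, ⟪x - P x, k - P x⟫ ≤ 0 := by
    choose P h1 h2 using exists_norm_eq_iInf_of_complete_convex hK hKc.isComplete hKconv
    exact ⟨P, h1, fun x => (norm_eq_iInf_iff_real_inner_le_zero hKconv (h1 x)).1 (h2 x)⟩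
  have hPn : ∀ x y : V, ‖P x - P y‖ ≤ ‖x - y‖ := by
    intro x y
    have h1 : ⟪x - P x, P y - P x⟫ ≤ 0 := hPchar x (P y) (hPmem y)
    have h2 : ⟪y - P y, P x - P y⟫ ≤ 0 := hPchar y (P x) (hPmem x)
    have key : ‖P x - P y‖ ^ 2 ≤ ⟪x - y, P x - P y⟫ := by
      have e : x - y = (x - P x) - (y - P y) + (P x - P y) := by abel
      rw [e, inner_add_left, inner_sub_left, real_inner_self_eq_norm_sq]
      have e2 : P y - P x = -(P x - P y) := by abel
      rw [e2, inner_neg_right] at h1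
      linarith
    have hcs : ⟪x - y, P x - P y⟫ ≤ ‖x - y‖ * ‖P x - P y‖ := real_inner_le_norm _ _
    rcases (norm_nonneg (P x - P y)).eq_or_lt' with h0 | h0
    · rw [h0]; exact norm_nonneg _
    · nlinarith [norm_nonneg (x - y)]
  -- Riesz representation
  set D := InnerProductSpace.toDual ℝ V with hD
  set a : V → V := fun y => D.symm (A y) with ha
  have hApp : ∀ (y : V) (f : StrongDual ℝ V) (w : V),
      (A y - f) w = ⟪a y - D.symm f, w⟫ := by
    intro y f w
    rw [ContinuousLinearMap.sub_apply, inner_sub_left, ha]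
    simp [hD, InnerProductSpace.toDual_symm_apply]
  have haA : ∀ (y₁ y₂ w : V), (A y₁ - A y₂) w = ⟪a y₁ - a y₂, w⟫ := by
    intro y₁ y₂ w
    rw [ContinuousLinearMap.sub_apply, inner_sub_left, ha]
    simp [hD, InnerProductSpace.toDual_symm_apply]
  have hanorm : ∀ y₁ y₂ : V, ‖a y₁ - a y₂‖ ≤ LA * ‖y₁ - y₂‖ := by
    intro y₁ y₂
    have : a y₁ - a y₂ = D.symm (A y₁ - A y₂) := by rw [ha, map_sub]
    rw [this, LinearIsometryEquiv.norm_map]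
    exact hALip y₁ y₂
  -- the map g = (I - Φ)⁻¹ via Banach fixed point
  have hc1 : ∀ z : V, ContractingWith LΦ.toNNReal (fun y => z + Φ y) := by
    intro z
    constructor
    · rw [← NNReal.coe_lt_coe, Real.coe_toNNReal _ hΦ0, NNReal.coe_one]
      exact hLΦ1
    · apply LipschitzWith.of_dist_le_mul
      intro y₁ y₂
      rw [dist_eq_norm, dist_eq_norm, Real.coe_toNNReal _ hΦ0]
      have e : z + Φ y₁ - (z + Φ y₂) = Φ y₁ - Φ y₂ := by abel
      rw [e]; exact hΦLip y₁ y₂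
  set g : V → V := fun z => ContractingWith.fixedPoint _ (hc1 z) with hg
  have hgfix : ∀ z : V, g z = z + Φ (g z) := fun z =>
    ((hc1 z).fixedPoint_isFixedPt).symm
  have hgu : ∀ z y : V, z + Φ y = y → y = g z := fun z y h =>
    (hc1 z).fixedPoint_unique h
  have hgz : ∀ z : V, g z - Φ (g z) = z := fun z => sub_eq_of_eq_add (hgfix z)
  have hgLip : ∀ z₁ z₂ : V, (1 - LΦ) * ‖g z₁ - g z₂‖ ≤ ‖z₁ - z₂‖ := by
    intro z₁ z₂
    have e : g z₁ - g z₂ = (z₁ - z₂) + (Φ (g z₁) - Φ (g z₂)) := by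
      conv_lhs => rw [hgfix z₁, hgfix z₂]
      abel
    have h1 : ‖g z₁ - g z₂‖ ≤ ‖z₁ - z₂‖ + LΦ * ‖g z₁ - g z₂‖ := by
      calc ‖g z₁ - g z₂‖ = ‖(z₁ - z₂) + (Φ (g z₁) - Φ (g z₂))‖ := by rw [← e]
        _ ≤ ‖z₁ - z₂‖ + ‖Φ (g z₁) - Φ (g z₂)‖ := norm_add_le _ _
        _ ≤ ‖z₁ - z₂‖ + LΦ * ‖g z₁ - g z₂‖ := by linarith [hΦLip (g z₁) (g z₂)]
    linarith
  -- the operator b = a ∘ g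
  set b : V → V := fun z => a (g z) with hb
  have hgdist : ∀ z₁ z₂ : V, ‖z₁ - z₂‖ ≤ (1 + LΦ) * ‖g z₁ - g z₂‖ := by
    intro z₁ z₂
    have e : (g z₁ - g z₂) - (Φ (g z₁) - Φ (g z₂)) = z₁ - z₂ := by
      have e0 : (g z₁ - g z₂) - (Φ (g z₁) - Φ (g z₂)) =
          (g z₁ - Φ (g z₁)) - (g z₂ - Φ (g z₂)) := by abel
      rw [e0, hgz, hgz]
    calc ‖z₁ - z₂‖ = ‖(g z₁ - g z₂) - (Φ (g z₁) - Φ (g z₂))‖ := by rw [e]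
      _ ≤ ‖g z₁ - g z₂‖ + ‖Φ (g z₁) - Φ (g z₂)‖ := norm_sub_le _ _
      _ ≤ (1 + LΦ) * ‖g z₁ - g z₂‖ := by nlinarith [hΦLip (g z₁) (g z₂)]
  have hbmono : ∀ z₁ z₂ : V, m * ‖z₁ - z₂‖ ^ 2 ≤ ⟪b z₁ - b z₂, z₁ - z₂⟫ := by
    intro z₁ z₂
    have hinner : ⟪b z₁ - b z₂, z₁ - z₂⟫ =
        ⟪a (g z₁) - a (g z₂), g z₁ - g z₂⟫ -
          ⟪a (g z₁) - a (g z₂), Φ (g z₁) - Φ (g z₂)⟫ := by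
      have e : (g z₁ - g z₂) - (Φ (g z₁) - Φ (g z₂)) = z₁ - z₂ := by
        have e0 : (g z₁ - g z₂) - (Φ (g z₁) - Φ (g z₂)) =
            (g z₁ - Φ (g z₁)) - (g z₂ - Φ (g z₂)) := by abel
        rw [e0, hgz, hgz]
      rw [hb, ← e, inner_sub_right]
    have h1 : μA * ‖g z₁ - g z₂‖ ^ 2 ≤ ⟪a (g z₁) - a (g z₂), g z₁ - g z₂⟫ := by
      rw [← haA]; exact hAmono _ _
    have h2 : ⟪a (g z₁) - a (g z₂), Φ (g z₁) - Φ (g z₂)⟫ ≤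
        (LA * ‖g z₁ - g z₂‖) * (LΦ * ‖g z₁ - g z₂‖) := by
      calc ⟪a (g z₁) - a (g z₂), Φ (g z₁) - Φ (g z₂)⟫
          ≤ ‖a (g z₁) - a (g z₂)‖ * ‖Φ (g z₁) - Φ (g z₂)‖ := real_inner_le_norm _ _
        _ ≤ (LA * ‖g z₁ - g z₂‖) * (LΦ * ‖g z₁ - g z₂‖) :=
          mul_le_mul (hanorm _ _) (hΦLip _ _) (norm_nonneg _) (by positivity)
    have h3 := hgdist z₁ z₂
    have heq : m * (1 + LΦ) ^ 2 = μA - LA * LΦ := by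
      rw [hm]; field_simp
    rw [hinner]
    nlinarith [mul_self_le_mul_self (norm_nonneg (z₁ - z₂)) h3,
      hmpos.le, norm_nonneg (g z₁ - g z₂), sq_nonneg ‖g z₁ - g z₂‖]
  have hbLip : ∀ z₁ z₂ : V, ‖b z₁ - b z₂‖ ≤ L * ‖z₁ - z₂‖ := by
    intro z₁ z₂
    have h1 : ‖b z₁ - b z₂‖ ≤ LA * ‖g z₁ - g z₂‖ := hanorm _ _
    have h2 := hgLip z₁ z₂
    have heq : L * (1 - LΦ) = LA := by rw [hLdef]; field_simp
    nlinarith [norm_nonneg (b z₁ - b z₂), norm_nonneg (g z₁ - g z₂), hLpos.le]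
  -- the contraction constant
  set ρ : ℝ := m / L ^ 2 with hρdef
  have hρ : 0 < ρ := div_pos hmpos (by positivity)
  set κ : ℝ := Real.sqrt (max 0 (1 - m ^ 2 / L ^ 2)) with hκdef
  have hκ0 : 0 ≤ κ := Real.sqrt_nonneg _
  have hκsq : κ ^ 2 = max 0 (1 - m ^ 2 / L ^ 2) := Real.sq_sqrt (le_max_left _ _)
  have hκ1 : κ < 1 := by
    have hlt : max 0 (1 - m ^ 2 / L ^ 2) < 1 := by
      apply max_lt one_pos
      have : 0 < m ^ 2 / L ^ 2 := by positivity
      linarith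
    nlinarith
  -- the fixed point map for each f
  set F : StrongDual ℝ V → V := fun f => D.symm f with hF
  set G : StrongDual ℝ V → V → V :=
    fun f z => P (z - ρ • (b z - F f)) with hG
  have hGkey : ∀ f z₁ z₂, ‖G f z₁ - G f z₂‖ ≤ κ * ‖z₁ - z₂‖ := by
    intro f z₁ z₂
    have step1 : ‖G f z₁ - G f z₂‖ ≤ ‖(z₁ - z₂) - ρ • (b z₁ - b z₂)‖ := by
      have e : (z₁ - ρ • (b z₁ - F f)) - (z₂ - ρ • (b z₂ - F f)) =
          (z₁ - z₂) - ρ • (b z₁ - b z₂) := by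
        rw [smul_sub, smul_sub, smul_sub]; abel
      calc ‖G f z₁ - G f z₂‖
          ≤ ‖(z₁ - ρ • (b z₁ - F f)) - (z₂ - ρ • (b z₂ - F f))‖ := hPn _ _
        _ = ‖(z₁ - z₂) - ρ • (b z₁ - b z₂)‖ := by rw [e]
    have step2 : ‖(z₁ - z₂) - ρ • (b z₁ - b z₂)‖ ^ 2 ≤ (κ * ‖z₁ - z₂‖) ^ 2 := by
      rw [norm_sub_sq_real, real_inner_smul_right, norm_smul, Real.norm_eq_abs,
        abs_of_pos hρ, mul_pow]
      have hmo := hbmono z₁ z₂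
      have hlip := hbLip z₁ z₂
      have hcomm : ⟪z₁ - z₂, b z₁ - b z₂⟫ = ⟪b z₁ - b z₂, z₁ - z₂⟫ :=
        real_inner_comm _ _
      have hsq : ‖b z₁ - b z₂‖ ^ 2 ≤ L ^ 2 * ‖z₁ - z₂‖ ^ 2 := by
        nlinarith [norm_nonneg (b z₁ - b z₂), norm_nonneg (z₁ - z₂), hLpos.le]
      have hfac : 1 - 2 * ρ * m + ρ ^ 2 * L ^ 2 = 1 - m ^ 2 / L ^ 2 := by
        rw [hρdef]; field_simp; ring
      have hle : 1 - m ^ 2 / L ^ 2 ≤ κ ^ 2 := hκsq ▸ le_max_right _ _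
      nlinarith [sq_nonneg ‖z₁ - z₂‖, hρ.le]
    have h0 : 0 ≤ κ * ‖z₁ - z₂‖ := mul_nonneg hκ0 (norm_nonneg _)
    nlinarith [norm_nonneg ((z₁ - z₂) - ρ • (b z₁ - b z₂)), norm_nonneg (G f z₁ - G f z₂)]
  have hcG : ∀ f, ContractingWith κ.toNNReal (G f) := by
    intro f
    constructor
    · rw [← NNReal.coe_lt_coe, Real.coe_toNNReal _ hκ0, NNReal.coe_one]; exact hκ1
    · apply LipschitzWith.of_dist_le_mul
      intro z₁ z₂
      rw [dist_eq_norm, dist_eq_norm, Real.coe_toNNReal _ hκ0]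
      exact hGkey f z₁ z₂
  set Z : StrongDual ℝ V → V := fun f => ContractingWith.fixedPoint _ (hcG f) with hZ
  have hZfix : ∀ f, P (Z f - ρ • (b (Z f) - F f)) = Z f := fun f =>
    (hcG f).fixedPoint_isFixedPt
  have hZK : ∀ f, Z f ∈ K := fun f => (hZfix f) ▸ hPmem _
  have hVI : ∀ f, ∀ k ∈ K, 0 ≤ ⟪b (Z f) - F f, k - Z f⟫ := by
    intro f k hk
    have h := hPchar (Z f - ρ • (b (Z f) - F f)) k hk
    rw [hZfix f] at h
    have e : Z f - ρ • (b (Z f) - F f) - Z f = -(ρ • (b (Z f) - F f)) := by abel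
    rw [e, inner_neg_left, real_inner_smul_left, neg_nonpos] at h
    exact le_of_mul_le_mul_left (by linarith) hρ
  -- the solution map
  set S : StrongDual ℝ V → V := fun f => g (Z f) with hS
  have hSfix : ∀ f, S f = Z f + Φ (S f) := fun f => hgfix (Z f)
  refine ⟨S, fun f => ⟨⟨⟨Z f, hZK f, (hSfix f).symm⟩, ?_⟩, ?_⟩, ?_⟩
  · -- the variational inequality
    rintro v ⟨k, hk, rfl⟩
    have e : k + Φ (S f) - S f = k - Z f := by
      nth_rewrite 2 [hSfix f]; abel
    rw [hApp, e]
    exact hVI f k hk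
  · -- uniqueness
    rintro y ⟨⟨k, hk, hky⟩, hineq⟩
    simp only at hky
    have hyg : y = g k := hgu k y hky
    have hSol : ∀ k' ∈ K, 0 ≤ ⟪b k - F f, k' - k⟫ := by
      intro k' hk'
      have hv : k' + Φ y ∈ (fun k => k + Φ y) '' K := ⟨k', hk', rfl⟩
      have h := hineq _ hv
      rw [hApp] at h
      have hΦy : Φ y = y - k := eq_sub_of_add_eq' hky
      have e : k' + Φ y - y = k' - k := by rw [hΦy]; abel
      have hbk : b k = a y := by rw [hyg]
      rw [e] at h; rw [hbk]; exact h
    -- two solutions of the VI coincide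
    have h1 := hVI f k hk
    have h2 := hSol (Z f) (hZK f)
    have hkey : ⟪b (Z f) - b k, k - Z f⟫ =
        ⟪b (Z f) - F f, k - Z f⟫ - ⟪b k - F f, k - Z f⟫ := by
      rw [inner_sub_left, inner_sub_left, inner_sub_left]; ring
    have e2 : Z f - k = -(k - Z f) := by abel
    have h2' : ⟪b k - F f, k - Z f⟫ ≤ 0 := by
      rw [e2, inner_neg_right] at h2; linarith
    have hmono := hbmono (Z f) k
    have e3 : ⟪b (Z f) - b k, Z f - k⟫ = -⟪b (Z f) - b k, k - Z f⟫ := by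
      rw [e2, inner_neg_right]
    have hzero : m * ‖Z f - k‖ ^ 2 ≤ 0 := by linarith
    have : Z f = k := by
      have hX : ‖Z f - k‖ ^ 2 ≤ 0 := by
        have h0 : m * ‖Z f - k‖ ^ 2 ≤ m * 0 := by rw [mul_zero]; linarith
        exact le_of_mul_le_mul_left h0 hmpos
      have hn : ‖Z f - k‖ = 0 :=
        pow_eq_zero_iff two_ne_zero |>.1 (le_antisymm hX (sq_nonneg _))
      exact sub_eq_zero.mp (norm_eq_zero.mp hn)
    rw [hyg, ← this]
  · -- Lipschitz continuity
    refine ⟨(1 - LΦ)⁻¹ * m⁻¹, fun f₁ f₂ => ?_⟩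
    have hFnorm : ‖F f₁ - F f₂‖ = ‖f₁ - f₂‖ := by
      rw [hF, ← map_sub, LinearIsometryEquiv.norm_map]
    have h1 := hVI f₁ (Z f₂) (hZK f₂)
    have h2 := hVI f₂ (Z f₁) (hZK f₁)
    have e2 : Z f₂ - Z f₁ = -(Z f₁ - Z f₂) := by abel
    have h1' : ⟪b (Z f₁) - F f₁, Z f₁ - Z f₂⟫ ≤ 0 := by
      rw [e2, inner_neg_right] at h1; linarith
    have hkey : ⟪b (Z f₁) - b (Z f₂), Z f₁ - Z f₂⟫ -
        ⟪F f₁ - F f₂, Z f₁ - Z f₂⟫ =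
        ⟪b (Z f₁) - F f₁, Z f₁ - Z f₂⟫ - ⟪b (Z f₂) - F f₂, Z f₁ - Z f₂⟫ := by
      rw [inner_sub_left, inner_sub_left, inner_sub_left, inner_sub_left]; ring
    have hmono := hbmono (Z f₁) (Z f₂)
    have hcs : ⟪F f₁ - F f₂, Z f₁ - Z f₂⟫ ≤ ‖f₁ - f₂‖ * ‖Z f₁ - Z f₂‖ := by
      calc ⟪F f₁ - F f₂, Z f₁ - Z f₂⟫ ≤ ‖F f₁ - F f₂‖ * ‖Z f₁ - Z f₂‖ :=
            real_inner_le_norm _ _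
        _ = ‖f₁ - f₂‖ * ‖Z f₁ - Z f₂‖ := by rw [hFnorm]
    have hstep : m * ‖Z f₁ - Z f₂‖ ^ 2 ≤ ‖f₁ - f₂‖ * ‖Z f₁ - Z f₂‖ := by linarith
    have hzb : m * ‖Z f₁ - Z f₂‖ ≤ ‖f₁ - f₂‖ := by
      rcases (norm_nonneg (Z f₁ - Z f₂)).eq_or_lt' with h0 | h0
      · rw [h0, mul_zero]; exact norm_nonneg _
      · refine le_of_mul_le_mul_right ?_ h0
        calc m * ‖Z f₁ - Z f₂‖ * ‖Z f₁ - Z f₂‖ = m * ‖Z f₁ - Z f₂‖ ^ 2 := by ring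
          _ ≤ ‖f₁ - f₂‖ * ‖Z f₁ - Z f₂‖ := hstep
    have hgl := hgLip (Z f₁) (Z f₂)
    have hcomb : ‖g (Z f₁) - g (Z f₂)‖ * ((1 - LΦ) * m) ≤ ‖f₁ - f₂‖ := by
      have h3 : m * ((1 - LΦ) * ‖g (Z f₁) - g (Z f₂)‖) ≤ m * ‖Z f₁ - Z f₂‖ :=
        mul_le_mul_of_nonneg_left hgl hmpos.le
      calc ‖g (Z f₁) - g (Z f₂)‖ * ((1 - LΦ) * m)
          = m * ((1 - LΦ) * ‖g (Z f₁) - g (Z f₂)‖) := by ring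
        _ ≤ m * ‖Z f₁ - Z f₂‖ := h3
        _ ≤ ‖f₁ - f₂‖ := hzb
    have hSe : ‖S f₁ - S f₂‖ = ‖g (Z f₁) - g (Z f₂)‖ := rfl
    rw [hSe]
    have hpos : 0 < (1 - LΦ) * m := mul_pos h1Φ hmpos
    rw [show (1 - LΦ)⁻¹ * m⁻¹ * ‖f₁ - f₂‖ = ‖f₁ - f₂‖ / ((1 - LΦ) * m) by
      field_simp]
    rw [le_div_iff₀ hpos]
    exact hcomb
end

section
/- Let V be a Hilbert space, ψ : V → V a Lipschitz map that is weakly sequentially continuous, and suppose I − ψ : V → V is a bijection whose inverse maps bounded sets to bounded sets. If w_n ⇀ w weakly in V, then (I − ψ)^{-1}(w_n) ⇀ (I − ψ)^{-1}(w) weakly in V. -/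
open Filter Topology

local notation "⟪" x ", " y "⟫" => @inner ℝ _ _ x y

/-- Sequential Banach–Alaoglu in a real Hilbert space: a bounded sequence has a weakly
convergent subsequence. -/
lemma hilbert_weak_seq_compact {V : Type*} [NormedAddCommGroup V] [InnerProductSpace ℝ V]
    [CompleteSpace V] (z : ℕ → V) (R : ℝ) (hR : ∀ n, ‖z n‖ ≤ R) :
    ∃ g : ℕ → ℕ, StrictMono g ∧ ∃ z' : V,
      ∀ v : V, Tendsto (fun k => ⟪z (g k), v⟫) atTop (𝓝 ⟪z', v⟫) := by
  classical
  have hR0 : (0:ℝ) ≤ R := le_trans (norm_nonneg _) (hR 0)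
  set M := (Submodule.span ℝ (Set.range z)).topologicalClosure with hM
  have hzM : ∀ n, z n ∈ M := fun n =>
    Submodule.le_topologicalClosure _ (Submodule.subset_span ⟨n, rfl⟩)
  have hsep : TopologicalSpace.IsSeparable (M : Set V) := by
    have h1 : TopologicalSpace.IsSeparable
        ((Submodule.span ℝ (Set.range z) : Submodule ℝ V) : Set V) :=
      (Set.countable_range z).isSeparable.span
    have : (M : Set V) = closure ((Submodule.span ℝ (Set.range z) : Submodule ℝ V) : Set V) := rfl
    rw [this]
    exact h1.closure
  obtain ⟨c, hc_count, hc_sub⟩ := hsep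
  have hcne : c.Nonempty := by
    rcases Set.eq_empty_or_nonempty c with h | h
    · exfalso
      have := hc_sub (M.zero_mem)
      rw [h, closure_empty] at this
      exact this
    · exact h
  obtain ⟨e, he⟩ := hc_count.exists_eq_range hcne
  -- diagonal extraction via compactness of a product of intervals
  have hmem : ∀ n, (fun k => ⟪z n, e k⟫) ∈ Set.pi Set.univ
      (fun k => Set.Icc (-(R * ‖e k‖)) (R * ‖e k‖)) := by
    intro n k _
    have h1 : |⟪z n, e k⟫| ≤ ‖z n‖ * ‖e k‖ := abs_real_inner_le_norm _ _
    have h2 : ‖z n‖ * ‖e k‖ ≤ R * ‖e k‖ :=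
      mul_le_mul_of_nonneg_right (hR n) (norm_nonneg _)
    have := abs_le.1 (h1.trans h2)
    exact ⟨this.1, this.2⟩
  obtain ⟨a, -, g, hg, hconv⟩ :=
    (isCompact_univ_pi (fun k => isCompact_Icc)).isSeqCompact hmem
  have hk : ∀ k, Tendsto (fun j => ⟪z (g j), e k⟫) atTop (𝓝 (a k)) := by
    intro k
    have := tendsto_pi_nhds.1 hconv k
    exact this
  -- Cauchy for every test vector
  haveI : CompleteSpace M := (Submodule.isClosed_topologicalClosure _).completeSpace_coe
  have hcauchy : ∀ v : V, CauchySeq (fun j => ⟪z (g j), v⟫) := by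
    intro v
    obtain ⟨m, hm, p, hp, rfl⟩ := M.exists_add_mem_mem_orthogonal v
    have hsimp : ∀ j, ⟪z (g j), m + p⟫ = ⟪z (g j), m⟫ := by
      intro j
      rw [inner_add_right, Submodule.inner_right_of_mem_orthogonal (hzM (g j)) hp, add_zero]
    simp only [hsimp]
    rw [Metric.cauchySeq_iff]
    intro ε hε
    -- choose d ∈ c close to m
    have hmc : m ∈ closure c := hc_sub hm
    have hden : ∃ d ∈ c, dist m d < ε / (4 * (R + 1)) := by
      rw [Metric.mem_closure_iff] at hmc
      exact hmc _ (by positivity)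
    obtain ⟨d, hdc, hdd⟩ := hden
    obtain ⟨k, rfl⟩ : ∃ k, e k = d := by rw [he] at hdc; exact hdc
    have hck : CauchySeq (fun j => ⟪z (g j), e k⟫) := (hk k).cauchySeq
    rw [Metric.cauchySeq_iff] at hck
    obtain ⟨N, hN⟩ := hck (ε / 2) (by positivity)
    refine ⟨N, fun i hi j hj => ?_⟩
    have est : ∀ n, |⟪z n, m⟫ - ⟪z n, e k⟫| ≤ R * ‖m - e k‖ := by
      intro n
      rw [← inner_sub_right]
      exact (abs_real_inner_le_norm _ _).trans
        (mul_le_mul_of_nonneg_right (hR n) (norm_nonneg _))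
    have hkey : ∀ n, |⟪z n, m⟫ - ⟪z n, e k⟫| ≤ R * (ε / (4 * (R + 1))) := by
      intro n
      refine (est n).trans (mul_le_mul_of_nonneg_left ?_ hR0)
      rw [dist_eq_norm] at hdd
      exact hdd.le
    have hRe : R * (ε / (4 * (R + 1))) ≤ ε / 4 := by
      have hR1 : (0:ℝ) < R + 1 := by linarith
      have heq : R * (ε / (4 * (R + 1))) = ε / 4 * (R / (R + 1)) := by
        field_simp
      rw [heq]
      have h1 : R / (R + 1) ≤ 1 := div_le_one_of_le₀ (by linarith) hR1.le
      calc ε / 4 * (R / (R + 1)) ≤ ε / 4 * 1 :=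
            mul_le_mul_of_nonneg_left h1 (by positivity)
        _ = ε / 4 := mul_one _
    have h2 := hN i hi j hj
    rw [Real.dist_eq] at h2 ⊢
    have : ⟪z (g i), m⟫ - ⟪z (g j), m⟫ =
        (⟪z (g i), m⟫ - ⟪z (g i), e k⟫) + (⟪z (g i), e k⟫ - ⟪z (g j), e k⟫)
        + (⟪z (g j), e k⟫ - ⟪z (g j), m⟫) := by ring
    rw [this]
    calc |(⟪z (g i), m⟫ - ⟪z (g i), e k⟫) + (⟪z (g i), e k⟫ - ⟪z (g j), e k⟫)
        + (⟪z (g j), e k⟫ - ⟪z (g j), m⟫)| ≤ |⟪z (g i), m⟫ - ⟪z (g i), e k⟫| + |⟪z (g i), e k⟫ - ⟪z (g j), e k⟫|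
        + |⟪z (g j), e k⟫ - ⟪z (g j), m⟫| := by
          exact (abs_add_le _ _).trans (add_le_add_left (abs_add_le _ _) _)
      _ < ε := by
          have hA : |⟪z (g i), m⟫ - ⟪z (g i), e k⟫| ≤ ε/4 := (hkey _).trans hRe
          have hC : |⟪z (g j), e k⟫ - ⟪z (g j), m⟫| ≤ ε/4 := by
            rw [abs_sub_comm]; exact (hkey _).trans hRe
          linarith
  -- build the weak limit
  set L : V → ℝ := fun v => limUnder atTop (fun j => ⟪z (g j), v⟫) with hL
  have htend : ∀ v, Tendsto (fun j => ⟪z (g j), v⟫) atTop (𝓝 (L v)) := fun v =>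
    (hcauchy v).tendsto_limUnder
  have hadd : ∀ v w, L (v + w) = L v + L w := by
    intro v w
    refine tendsto_nhds_unique ?_ ((htend v).add (htend w))
    simpa only [inner_add_right] using htend (v + w)
  have hsmul : ∀ (r : ℝ) v, L (r • v) = r * L v := by
    intro r v
    refine tendsto_nhds_unique ?_ ((htend v).const_mul r)
    simpa only [real_inner_smul_right] using htend (r • v)
  have hbound : ∀ v, ‖L v‖ ≤ (R + 1) * ‖v‖ := by
    intro v
    rw [Real.norm_eq_abs]
    have h1 : Tendsto (fun j => |⟪z (g j), v⟫|) atTop (𝓝 |L v|) := (htend v).abs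
    refine le_of_tendsto h1 (Eventually.of_forall fun j => ?_)
    exact (abs_real_inner_le_norm _ _).trans
      (mul_le_mul_of_nonneg_right ((hR _).trans (by linarith)) (norm_nonneg _))
  let f : V →ₗ[ℝ] ℝ :=
    { toFun := L, map_add' := hadd, map_smul' := hsmul }
  let φ : StrongDual ℝ V := LinearMap.mkContinuous f (R + 1) hbound
  refine ⟨g, hg, (InnerProductSpace.toDual ℝ V).symm φ, fun v => ?_⟩
  have : ⟪(InnerProductSpace.toDual ℝ V).symm φ, v⟫ = φ v :=
    InnerProductSpace.toDual_symm_apply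
  rw [this]
  exact htend v

lemma hilbert_weak_seq_compact_dual {V : Type*} [NormedAddCommGroup V] [InnerProductSpace ℝ V]
    [CompleteSpace V] (z : ℕ → V) (R : ℝ) (hR : ∀ n, ‖z n‖ ≤ R) :
    ∃ g : ℕ → ℕ, StrictMono g ∧ ∃ z' : V,
      ∀ φ : StrongDual ℝ V, Tendsto (fun k => φ (z (g k))) atTop (𝓝 (φ z')) := by
  obtain ⟨g, hg, z', hz'⟩ := hilbert_weak_seq_compact z R hR
  refine ⟨g, hg, z', fun φ => ?_⟩
  have h1 : ∀ x : V, φ x = ⟪x, (InnerProductSpace.toDual ℝ V).symm φ⟫ := by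
    intro x
    rw [real_inner_comm, InnerProductSpace.toDual_symm_apply]
  simp only [h1]
  exact hz' _

theorem inverse_weakly_sequentially_continuous
    {V : Type*} [NormedAddCommGroup V] [InnerProductSpace ℝ V] [CompleteSpace V]
    (ψ : V → V) (Lψ : ℝ)
    (hLip : ∀ z₁ z₂ : V, ‖ψ z₁ - ψ z₂‖ ≤ Lψ * ‖z₁ - z₂‖)
    (hwc : ∀ (z : ℕ → V) (z₀ : V),
      (∀ φ : StrongDual ℝ V, Tendsto (fun n => φ (z n)) atTop (𝓝 (φ z₀))) →
      (∀ φ : StrongDual ℝ V,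
        Tendsto (fun n => φ (ψ (z n))) atTop (𝓝 (φ (ψ z₀)))))
    (hbij : Function.Bijective (fun z : V => z - ψ z))
    (hbdd : ∀ s : Set V, Bornology.IsBounded s →
      Bornology.IsBounded (Function.invFun (fun z : V => z - ψ z) '' s))
    (w : ℕ → V) (w₀ : V)
    (hw : ∀ φ : StrongDual ℝ V, Tendsto (fun n => φ (w n)) atTop (𝓝 (φ w₀))) :
    ∀ φ : StrongDual ℝ V,
      Tendsto (fun n => φ (Function.invFun (fun z : V => z - ψ z) (w n))) atTop
        (𝓝 (φ (Function.invFun (fun z : V => z - ψ z) w₀))) := by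
  classical
  set T : V → V := fun z => z - ψ z with hT
  set Ti : V → V := Function.invFun T with hTi
  have hright : ∀ x, T (Ti x) = x := fun x => Function.rightInverse_invFun hbij.surjective x
  have hleft : ∀ x, Ti (T x) = x := fun x => Function.leftInverse_invFun hbij.injective x
  set z : ℕ → V := fun n => Ti (w n) with hz
  set z₀ : V := Ti w₀ with hz₀
  -- the sequence w is bounded
  have hwb : ∃ Cw : ℝ, ∀ n, ‖w n‖ ≤ Cw := by
    have h1 : ∀ φ : StrongDual ℝ V, ∃ C, ∀ n,
        ‖(NormedSpace.inclusionInDoubleDual ℝ V (w n)) φ‖ ≤ C := by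
      intro φ
      have hb : BddAbove (Set.range fun n => ‖φ (w n)‖) := (hw φ).norm.bddAbove_range
      obtain ⟨C, hC⟩ := hb
      refine ⟨C, fun n => ?_⟩
      rw [NormedSpace.dual_def]
      exact hC ⟨n, rfl⟩
    obtain ⟨C', hC'⟩ := banach_steinhaus h1
    refine ⟨C', fun n => ?_⟩
    have : ‖NormedSpace.inclusionInDoubleDual ℝ V (w n)‖ = ‖w n‖ :=
      (NormedSpace.inclusionInDoubleDualLi ℝ (E := V)).norm_map (w n)
    rw [← this]
    exact hC' n
  obtain ⟨Cw, hCw⟩ := hwb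
  -- the sequence z is bounded
  have hzb : ∃ Cz : ℝ, ∀ n, ‖z n‖ ≤ Cz := by
    have h1 : Bornology.IsBounded (Set.range w) :=
      isBounded_iff_forall_norm_le.2 ⟨Cw, by rintro x ⟨n, rfl⟩; exact hCw n⟩
    have h2 := hbdd _ h1
    obtain ⟨C, hC⟩ := isBounded_iff_forall_norm_le.1 h2
    exact ⟨C, fun n => hC _ ⟨w n, ⟨n, rfl⟩, rfl⟩⟩
  obtain ⟨Cz, hCz⟩ := hzb
  -- main subsequence argument
  intro φ
  apply tendsto_of_subseq_tendsto
  intro ns hns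
  obtain ⟨g, hg, z', hz'⟩ :=
    hilbert_weak_seq_compact_dual (fun k => z (ns k)) Cz (fun k => hCz (ns k))
  -- ψ applied to the subsequence converges weakly to ψ z'
  have hpsi := hwc (fun k => z (ns (g k))) z' hz'
  -- hence w ∘ ns ∘ g converges weakly to T z'
  have hwT : ∀ φ' : StrongDual ℝ V,
      Tendsto (fun k => φ' (w (ns (g k)))) atTop (𝓝 (φ' (T z'))) := by
    intro φ'
    have h1 := (hz' φ').sub (hpsi φ')
    have h2 : ∀ k, φ' (z (ns (g k))) - φ' (ψ (z (ns (g k)))) = φ' (w (ns (g k))) := by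
      intro k
      rw [← map_sub]
      congr 1
      exact hright (w (ns (g k)))
    have h3 : φ' z' - φ' (ψ z') = φ' (T z') := by rw [← map_sub]
    simp only [h2, h3] at h1
    exact h1
  -- w ∘ ns ∘ g also converges weakly to w₀
  have hwns : ∀ φ' : StrongDual ℝ V,
      Tendsto (fun k => φ' (w (ns (g k)))) atTop (𝓝 (φ' w₀)) := fun φ' =>
    (hw φ').comp (hns.comp hg.tendsto_atTop)
  -- uniqueness of weak limits: T z' = w₀
  have hTz' : T z' = w₀ := by
    have hd : ∀ φ' : StrongDual ℝ V, φ' (T z') = φ' w₀ := fun φ' =>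
      tendsto_nhds_unique (hwT φ') (hwns φ')
    have h := hd (InnerProductSpace.toDual ℝ V (T z' - w₀))
    rw [InnerProductSpace.toDual_apply_apply, InnerProductSpace.toDual_apply_apply,
      ← sub_eq_zero, ← inner_sub_right] at h
    rw [← sub_eq_zero]
    exact inner_self_eq_zero.1 h
  have hz'z₀ : z' = z₀ := by rw [hz₀, ← hTz', hleft]
  exact ⟨g, by rw [← hz'z₀]; exact hz' φ⟩
end

section
/- On V = H¹₀(0,1) with norm ‖v‖² = ∫₀¹ |v′|², for h ∈ (0, 1/8] define t_h := √(2h) and y_h(x) := t_h x − x²/2 for x ≤ t_h, y_h(x) := h for t_h < x < 1 − t_h, and y_h(x) := t_h(1−x) − (1−x)²/2 for x ≥ 1 − t_h. Then ‖y_h‖_{H¹₀} = C h^{3/4} for a constant C > 0 independent of h; in particular, since y_0 = 0, the map h ↦ y_h is not Lipschitz continuous at h = 0. -/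
noncomputable def obstacleSol (h x : ℝ) : ℝ :=
  if x ≤ Real.sqrt (2 * h) then Real.sqrt (2 * h) * x - x ^ 2 / 2
  else if x < 1 - Real.sqrt (2 * h) then h
  else Real.sqrt (2 * h) * (1 - x) - (1 - x) ^ 2 / 2

lemma ae_ne_pt (p : ℝ) : ∀ᵐ x : ℝ, x ≠ p := by
  refine MeasureTheory.ae_iff.mpr ?_
  simp [not_not]

lemma deriv_left (h : ℝ) {x : ℝ} (hx : x < Real.sqrt (2 * h)) :
    deriv (obstacleSol h) x = Real.sqrt (2 * h) - x := by
  set t := Real.sqrt (2 * h)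
  have hev : obstacleSol h =ᶠ[nhds x] fun y => t * y - y ^ 2 / 2 := by
    filter_upwards [Iio_mem_nhds hx] with y hy
    have hy' : y ≤ Real.sqrt (2 * h) := le_of_lt (Set.mem_Iio.mp hy)
    simp only [obstacleSol, if_pos hy']
    rfl
  rw [hev.deriv_eq]
  have hd : HasDerivAt (fun y : ℝ => t * y - y ^ 2 / 2) (t - x) x := by
    have := ((hasDerivAt_id x).const_mul t).sub ((hasDerivAt_pow 2 x).div_const 2)
    exact this.congr_deriv (by ring)
  exact hd.deriv

lemma deriv_mid (h : ℝ) {x : ℝ} (hx1 : Real.sqrt (2 * h) < x)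
    (hx2 : x < 1 - Real.sqrt (2 * h)) :
    deriv (obstacleSol h) x = 0 := by
  set t := Real.sqrt (2 * h)
  have hev : obstacleSol h =ᶠ[nhds x] fun _ => h := by
    filter_upwards [Ioo_mem_nhds hx1 hx2] with y hy
    simp only [obstacleSol, if_neg (show ¬ y ≤ Real.sqrt (2 * h) from not_le.mpr hy.1),
      if_pos (show y < 1 - Real.sqrt (2 * h) from hy.2)]
  rw [hev.deriv_eq, deriv_const]

lemma deriv_right (h : ℝ) (ht : Real.sqrt (2 * h) ≤ 1 / 2) {x : ℝ}
    (hx : 1 - Real.sqrt (2 * h) < x) :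
    deriv (obstacleSol h) x = (1 - Real.sqrt (2 * h)) - x := by
  set t := Real.sqrt (2 * h) with htdef
  have hev : obstacleSol h =ᶠ[nhds x] fun y => t * (1 - y) - (1 - y) ^ 2 / 2 := by
    filter_upwards [Ioi_mem_nhds hx] with y hy
    have h1 : ¬ y ≤ t := by
      simp only [Set.mem_Ioi] at hy; push_neg; linarith
    have h2 : ¬ y < 1 - t := by simp only [Set.mem_Ioi] at hy; linarith
    simp only [obstacleSol, ← htdef, if_neg h1, if_neg h2]
  rw [hev.deriv_eq]
  have h1 : HasDerivAt (fun y : ℝ => 1 - y) (-1) x := by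
    exact ((hasDerivAt_const x (1:ℝ)).sub (hasDerivAt_id x)).congr_deriv (by norm_num)
  have hd : HasDerivAt (fun y : ℝ => t * (1 - y) - (1 - y) ^ 2 / 2)
      ((1 - t) - x) x := by
    have := (h1.const_mul t).sub ((h1.pow 2).div_const 2)
    exact this.congr_deriv (by ring)
  exact hd.deriv

theorem obstacle_norm_not_lipschitz :
    ∃ C : ℝ, 0 < C ∧
      (∀ h ∈ Set.Ioc (0 : ℝ) (1 / 8),
        Real.sqrt (∫ x in (0:ℝ)..1, (deriv (obstacleSol h) x) ^ 2)
          = C * h ^ ((3 : ℝ) / 4)) ∧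
      ¬ ∃ K : ℝ, ∀ h ∈ Set.Ioc (0 : ℝ) (1 / 8),
        Real.sqrt (∫ x in (0:ℝ)..1, (deriv (obstacleSol h) x) ^ 2) ≤ K * h := by
  set C : ℝ := Real.sqrt (2 / 3) * 2 ^ ((3 : ℝ) / 4) with hC
  have hCpos : 0 < C := by
    apply mul_pos (Real.sqrt_pos.mpr (by norm_num))
    exact Real.rpow_pos_of_pos (by norm_num) _
  have main : ∀ h ∈ Set.Ioc (0 : ℝ) (1 / 8),
      Real.sqrt (∫ x in (0:ℝ)..1, (deriv (obstacleSol h) x) ^ 2)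
        = C * h ^ ((3 : ℝ) / 4) := by
    rintro h ⟨hh0, hh8⟩
    set t := Real.sqrt (2 * h) with htdef
    have h2h : (0:ℝ) ≤ 2 * h := by linarith
    have ht0 : 0 < t := Real.sqrt_pos.mpr (by linarith)
    have ht2 : t ^ 2 = 2 * h := Real.sq_sqrt h2h
    have thalf : t ≤ 1 / 2 := by
      rw [htdef, show (1:ℝ)/2 = Real.sqrt (1/4) by
        rw [show (1:ℝ)/4 = (1/2)^2 by norm_num, Real.sqrt_sq (by norm_num)]]
      exact Real.sqrt_le_sqrt (by linarith)
    set F : ℝ → ℝ := fun x => (deriv (obstacleSol h) x) ^ 2 with hF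
    -- piece 1
    have hae1 : ∀ᵐ x : ℝ, x ∈ Set.uIoc (0:ℝ) t → F x = (t - x) ^ 2 := by
      filter_upwards [ae_ne_pt t] with x hne hmem
      rw [Set.uIoc_of_le ht0.le] at hmem
      have : x < t := lt_of_le_of_ne hmem.2 hne
      rw [hF]; simp only []; rw [deriv_left h this]
    have hg1 : Continuous fun x : ℝ => (t - x) ^ 2 := by continuity
    have hI1 : IntervalIntegrable F MeasureTheory.volume 0 t :=
      (hg1.intervalIntegrable 0 t).congr_ae
        ((MeasureTheory.ae_restrict_iff' measurableSet_uIoc).mpr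
          (by filter_upwards [hae1] with x hx hm; exact (hx hm).symm))
    have hv1 : (∫ x in (0:ℝ)..t, F x) = t ^ 3 / 3 := by
      rw [intervalIntegral.integral_congr_ae hae1,
        intervalIntegral.integral_comp_sub_left (fun u => u ^ 2) t]
      rw [integral_pow]
      norm_num
    -- piece 2
    have hae2 : ∀ᵐ x : ℝ, x ∈ Set.uIoc t (1 - t) → F x = 0 := by
      filter_upwards [ae_ne_pt (1 - t)] with x hne hmem
      rw [Set.uIoc_of_le (by linarith)] at hmem
      have : x < 1 - t := lt_of_le_of_ne hmem.2 hne
      rw [hF]; simp only []; rw [deriv_mid h hmem.1 this]; ring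
    have hI2 : IntervalIntegrable F MeasureTheory.volume t (1 - t) :=
      (continuous_const.intervalIntegrable t (1-t)).congr_ae
        ((MeasureTheory.ae_restrict_iff' measurableSet_uIoc).mpr
          (by filter_upwards [hae2] with x hx hm; exact (hx hm).symm))
    have hv2 : (∫ x in t..(1-t), F x) = 0 := by
      rw [intervalIntegral.integral_congr_ae hae2]; simp
    -- piece 3
    have hae3 : ∀ᵐ x : ℝ, x ∈ Set.uIoc (1 - t) 1 → F x = ((1 - t) - x) ^ 2 := by
      refine MeasureTheory.ae_of_all _ fun x hmem => ?_
      rw [Set.uIoc_of_le (by linarith)] at hmem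
      rw [hF]; simp only []; rw [deriv_right h thalf hmem.1]
    have hg3 : Continuous fun x : ℝ => ((1 - t) - x) ^ 2 := by continuity
    have hI3 : IntervalIntegrable F MeasureTheory.volume (1 - t) 1 :=
      (hg3.intervalIntegrable _ _).congr_ae
        ((MeasureTheory.ae_restrict_iff' measurableSet_uIoc).mpr
          (by filter_upwards [hae3] with x hx hm; exact (hx hm).symm))
    have hv3 : (∫ x in (1-t)..1, F x) = t ^ 3 / 3 := by
      rw [intervalIntegral.integral_congr_ae hae3,
        intervalIntegral.integral_comp_sub_left (fun u => u ^ 2) (1 - t)]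
      rw [integral_pow]; ring_nf
    -- combine
    have hsplit : (∫ x in (0:ℝ)..1, F x) = 2 / 3 * t ^ 3 := by
      rw [← intervalIntegral.integral_add_adjacent_intervals hI1 (hI2.trans hI3),
        ← intervalIntegral.integral_add_adjacent_intervals hI2 hI3, hv1, hv2, hv3]
      ring
    rw [hsplit]
    -- now sqrt(2/3 * t^3) = C * h^{3/4}
    have ht3 : t ^ 3 = 2 ^ ((3:ℝ)/2) * h ^ ((3:ℝ)/2) := by
      rw [htdef, Real.sqrt_eq_rpow, ← Real.rpow_natCast ((2*h) ^ (1/(2:ℝ))) 3,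
        ← Real.rpow_mul h2h, Real.mul_rpow (by norm_num) hh0.le]
      norm_num
    rw [ht3, show (2:ℝ)/3 * (2 ^ ((3:ℝ)/2) * h ^ ((3:ℝ)/2))
        = (2/3 * 2 ^ ((3:ℝ)/2)) * h ^ ((3:ℝ)/2) by ring,
      Real.sqrt_mul (by positivity) _, Real.sqrt_eq_rpow (h ^ ((3:ℝ)/2)),
      ← Real.rpow_mul hh0.le]
    congr 1
    · rw [hC, Real.sqrt_mul (by norm_num), Real.sqrt_eq_rpow ((2:ℝ) ^ ((3:ℝ)/2)),
        ← Real.rpow_mul (by norm_num)]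
      norm_num
    · norm_num
  refine ⟨C, hCpos, main, ?_⟩
  rintro ⟨K, hK⟩
  set K' : ℝ := max K 1 with hK'
  have hK'1 : (1:ℝ) ≤ K' := le_max_right _ _
  have hK'0 : (0:ℝ) < K' := by linarith
  set h₀ : ℝ := min (1/8) ((C / (2 * K')) ^ 4) with hh₀
  have hcpos : 0 < C / (2 * K') := by positivity
  have hmem : h₀ ∈ Set.Ioc (0:ℝ) (1/8) :=
    ⟨lt_min (by norm_num) (by positivity), min_le_left _ _⟩
  have hb := hK h₀ hmem
  rw [main h₀ hmem] at hb
  have hb' : C * h₀ ^ ((3:ℝ)/4) ≤ K' * h₀ := by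
    refine hb.trans (mul_le_mul_of_nonneg_right (le_max_left _ _) hmem.1.le)
  have h14 : h₀ ^ ((1:ℝ)/4) ≤ C / (2 * K') := by
    have : h₀ ^ ((1:ℝ)/4) ≤ ((C / (2 * K')) ^ 4) ^ ((1:ℝ)/4) :=
      Real.rpow_le_rpow hmem.1.le (min_le_right _ _) (by norm_num)
    calc h₀ ^ ((1:ℝ)/4) ≤ ((C / (2 * K')) ^ 4) ^ ((1:ℝ)/4) := this
      _ = C / (2 * K') := by
          rw [← Real.rpow_natCast (C / (2 * K')) 4, ← Real.rpow_mul hcpos.le]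
          norm_num
  have hsplit : h₀ = h₀ ^ ((1:ℝ)/4) * h₀ ^ ((3:ℝ)/4) := by
    rw [← Real.rpow_add hmem.1, ← Real.rpow_one h₀]
    norm_num
  have h34pos : 0 < h₀ ^ ((3:ℝ)/4) := Real.rpow_pos_of_pos hmem.1 _
  have : K' * h₀ ≤ C / 2 * h₀ ^ ((3:ℝ)/4) := by
    calc K' * h₀
        = (K' * h₀ ^ ((1:ℝ)/4)) * h₀ ^ ((3:ℝ)/4) := by rw [mul_assoc, ← hsplit]
      _ ≤ (K' * (C / (2 * K'))) * h₀ ^ ((3:ℝ)/4) := by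
          apply mul_le_mul_of_nonneg_right _ h34pos.le
          exact mul_le_mul_of_nonneg_left h14 hK'0.le
      _ = C / 2 * h₀ ^ ((3:ℝ)/4) := by field_simp
  nlinarith [h34pos, hCpos]
end

section
/- Let V be a Hilbert space, K ⊆ V a closed convex cone, D : V → V a bounded linear operator such that I − D is bijective, and T : V → V* a bounded linear operator such that T(I − D)^{-1} is coercive. Then for every h ∈ V* there is a unique x ∈ V with (I − D)x ∈ K and ⟨T x − h, v − x⟩ ≥ 0 for all v ∈ K + D x. -/
open scoped RealInnerProductSpace

set_option maxHeartbeats 1000000 in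
theorem linearized_qvi_unique_solvability
    {V : Type*} [NormedAddCommGroup V] [InnerProductSpace ℝ V] [CompleteSpace V]
    (K : Set V) (hK : K.Nonempty) (hKc : IsClosed K) (hKconv : Convex ℝ K)
    (hKcone : ∀ x ∈ K, ∀ c : ℝ, 0 ≤ c → c • x ∈ K)
    (D : V →L[ℝ] V) (T : V →L[ℝ] StrongDual ℝ V)
    (hbij : Function.Bijective (fun x : V => x - D x))
    (μ : ℝ) (hμ : 0 < μ)
    (hcoer : ∀ w : V,
      μ * ‖w‖ ^ 2 ≤ T (Function.invFun (fun x : V => x - D x) w) w) :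
    ∀ h : StrongDual ℝ V,
      ∃! x : V, x - D x ∈ K ∧
        ∀ v ∈ (fun k => k + D x) '' K, 0 ≤ (T x - h) (v - x) := by
  intro h
  haveI : Nonempty V := ⟨hK.some⟩
  -- the operator E = I - D as a continuous linear equiv
  set E : V →L[ℝ] V := ContinuousLinearMap.id ℝ V - D with hEdef
  have hEapp : ∀ x : V, E x = x - D x := fun x => rfl
  have hbijE : Function.Bijective E := by
    simpa [funext (hEapp)] using hbij
  have hker : E.ker = ⊥ := LinearMap.ker_eq_bot (f := (E : V →ₗ[ℝ] V)) |>.2 hbijE.1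
  have hrng : E.range = ⊤ := LinearMap.range_eq_top (f := (E : V →ₗ[ℝ] V)) |>.2 hbijE.2
  set E' : V ≃L[ℝ] V := ContinuousLinearEquiv.ofBijective E hker hrng with hE'def
  have hE'app : ∀ x : V, E' x = x - D x := fun x => hEapp x
  have hinv : ∀ w : V, Function.invFun (fun x : V => x - D x) w = E'.symm w := by
    intro w
    apply hbij.1
    have h1 : (fun x : V => x - D x) (Function.invFun (fun x : V => x - D x) w) = w :=
      Function.invFun_eq (hbij.2 w)
    have h2 : (fun x : V => x - D x) (E'.symm w) = w := by
      simpa [hE'app] using E'.apply_symm_apply w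
    rw [h1, h2]
  -- Riesz representations
  set z : V := (InnerProductSpace.toDual ℝ V).symm h with hzdef
  have hz : ∀ v : V, ⟪z, v⟫ = h v := fun v => InnerProductSpace.toDual_symm_apply
  set A : V → V := fun w => (InnerProductSpace.toDual ℝ V).symm (T (E'.symm w)) with hAdef
  have hA : ∀ w v : V, ⟪A w, v⟫ = T (E'.symm w) v := fun w v =>
    InnerProductSpace.toDual_symm_apply
  have hAsub : ∀ u u' : V, A u - A u' = A (u - u') := by
    intro u u'
    simp only [hAdef, ← map_sub]
  set C : ℝ := ‖T‖ * ‖(E'.symm : V →L[ℝ] V)‖ with hCdef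
  have hC : 0 ≤ C := mul_nonneg (ContinuousLinearMap.opNorm_nonneg _) (norm_nonneg _)
  have hAnorm : ∀ w : V, ‖A w‖ ≤ C * ‖w‖ := by
    intro w
    have h1 : ‖A w‖ = ‖T (E'.symm w)‖ := LinearIsometryEquiv.norm_map _ _
    have h2 : ‖T (E'.symm w)‖ ≤ ‖T‖ * ‖E'.symm w‖ := T.le_opNorm _
    have h3 : ‖E'.symm w‖ ≤ ‖(E'.symm : V →L[ℝ] V)‖ * ‖w‖ :=
      (E'.symm : V →L[ℝ] V).le_opNorm w
    calc ‖A w‖ = ‖T (E'.symm w)‖ := h1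
      _ ≤ ‖T‖ * ‖E'.symm w‖ := h2
      _ ≤ ‖T‖ * (‖(E'.symm : V →L[ℝ] V)‖ * ‖w‖) :=
          mul_le_mul_of_nonneg_left h3 (ContinuousLinearMap.opNorm_nonneg _)
      _ = C * ‖w‖ := by ring
  have hAcoer : ∀ w : V, μ * ‖w‖ ^ 2 ≤ ⟪A w, w⟫ := by
    intro w
    rw [hA]
    have := hcoer w
    rwa [hinv w] at this
  -- projection onto K
  have projEx : ∀ u : V, ∃ v, v ∈ K ∧ ∀ k ∈ K, ⟪u - v, k - v⟫ ≤ 0 := by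
    intro u
    obtain ⟨v, hv, hmin⟩ :=
      exists_norm_eq_iInf_of_complete_convex hK hKc.isComplete hKconv u
    exact ⟨v, hv, (norm_eq_iInf_iff_real_inner_le_zero hKconv hv).1 hmin⟩
  choose P hPmem hPle using projEx
  have projUniq : ∀ u v : V, v ∈ K → (∀ k ∈ K, ⟪u - v, k - v⟫ ≤ 0) → P u = v := by
    intro u v hv hvle
    have h1 := hPle u v hv
    have h2 := hvle (P u) (hPmem u)
    have e3 : ‖v - P u‖ ^ 2 = ⟪u - P u, v - P u⟫ + ⟪u - v, P u - v⟫ := by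
      rw [← real_inner_self_eq_norm_sq]
      simp only [inner_sub_left, inner_sub_right]
      have c1 : ⟪u, v⟫ = ⟪v, u⟫ := real_inner_comm _ _
      have c2 : ⟪u, P u⟫ = ⟪P u, u⟫ := real_inner_comm _ _
      have c3 : ⟪v, P u⟫ = ⟪P u, v⟫ := real_inner_comm _ _
      linarith
    have h4 : ‖v - P u‖ ^ 2 ≤ 0 := by linarith
    have h5 : v - P u = 0 := by
      have := sq_nonneg ‖v - P u‖
      have : ‖v - P u‖ = 0 := by nlinarith [norm_nonneg (v - P u)]
      exact norm_eq_zero.1 this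
    have : v = P u := by
      have := sub_eq_zero.1 h5
      exact this
    exact this.symm
  have Plip : ∀ u u' : V, ‖P u - P u'‖ ≤ ‖u - u'‖ := by
    intro u u'
    have h1 := hPle u (P u') (hPmem u')
    have h2 := hPle u' (P u) (hPmem u)
    have key : ‖P u - P u'‖ ^ 2 ≤ ⟪u - u', P u - P u'⟫ := by
      rw [← real_inner_self_eq_norm_sq]
      simp only [inner_sub_left, inner_sub_right] at *
      have c1 : ⟪u, P u⟫ = ⟪P u, u⟫ := real_inner_comm _ _
      have c2 : ⟪u, P u'⟫ = ⟪P u', u⟫ := real_inner_comm _ _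
      have c3 : ⟪u', P u⟫ = ⟪P u, u'⟫ := real_inner_comm _ _
      have c4 : ⟪u', P u'⟫ = ⟪P u', u'⟫ := real_inner_comm _ _
      have c5 : ⟪P u, P u'⟫ = ⟪P u', P u⟫ := real_inner_comm _ _
      linarith
    have hcs := real_inner_le_norm (u - u') (P u - P u')
    nlinarith [norm_nonneg (P u - P u'), norm_nonneg (u - u')]
  -- the contraction
  set ρ : ℝ := μ / (C ^ 2 + 1) with hρdef
  have hc2 : (0:ℝ) < C ^ 2 + 1 := by positivity
  have hρ : 0 < ρ := div_pos hμ hc2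
  set Φ : V → V := fun u => P (u - ρ • (A u - z)) with hΦdef
  have contr : ∀ d : V, ‖d - ρ • A d‖ ^ 2 ≤ (1 - μ ^ 2 / (C ^ 2 + 1)) * ‖d‖ ^ 2 := by
    intro d
    have expand : ‖d - ρ • A d‖ ^ 2 = ‖d‖ ^ 2 - 2 * (ρ * ⟪A d, d⟫) + ρ ^ 2 * ‖A d‖ ^ 2 := by
      rw [norm_sub_sq_real, real_inner_smul_right, norm_smul]
      have : ⟪d, A d⟫ = ⟪A d, d⟫ := real_inner_comm _ _
      rw [this]
      simp [abs_of_pos hρ, mul_pow]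
    have h1 := hAcoer d
    have h2 := hAnorm d
    have h3 : ‖A d‖ ^ 2 ≤ C ^ 2 * ‖d‖ ^ 2 := by
      nlinarith [norm_nonneg (A d), norm_nonneg d]
    have hρμ : μ ^ 2 / (C ^ 2 + 1) = ρ * μ := by rw [hρdef]; field_simp
    have hkey : ρ ^ 2 * C ^ 2 = ρ * μ - ρ ^ 2 := by rw [hρdef]; field_simp; ring
    rw [expand, hρμ]
    nlinarith [mul_le_mul_of_nonneg_left h1 hρ.le,
      mul_le_mul_of_nonneg_left h3 (sq_nonneg ρ),
      mul_le_mul_of_nonneg_right (le_of_eq hkey) (sq_nonneg ‖d‖),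
      mul_nonneg (sq_nonneg ρ) (sq_nonneg ‖d‖), sq_nonneg ‖d‖, hρ.le]
  set L : ℝ := Real.sqrt (max 0 (1 - μ ^ 2 / (C ^ 2 + 1))) with hLdef
  have hL1 : L < 1 := by
    rw [hLdef]
    have : max 0 (1 - μ ^ 2 / (C ^ 2 + 1)) < 1 := by
      apply max_lt one_pos
      have : 0 < μ ^ 2 / (C ^ 2 + 1) := by positivity
      linarith
    calc Real.sqrt (max 0 (1 - μ ^ 2 / (C ^ 2 + 1))) < Real.sqrt 1 :=
          (Real.sqrt_lt_sqrt (le_max_left _ _) this)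
      _ = 1 := Real.sqrt_one
  have hΦlip : ∀ u u' : V, ‖Φ u - Φ u'‖ ≤ L * ‖u - u'‖ := by
    intro u u'
    have harg : (u - ρ • (A u - z)) - (u' - ρ • (A u' - z)) = (u - u') - ρ • A (u - u') := by
      rw [← hAsub]
      rw [smul_sub, smul_sub, smul_sub]
      abel
    have h1 : ‖Φ u - Φ u'‖ ≤ ‖(u - u') - ρ • A (u - u')‖ := by
      rw [← harg]; exact Plip _ _
    have h2 := contr (u - u')
    have h3 : ‖(u - u') - ρ • A (u - u')‖ ^ 2 ≤ max 0 (1 - μ ^ 2 / (C ^ 2 + 1)) * ‖u - u'‖ ^ 2 :=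
      le_trans h2 (mul_le_mul_of_nonneg_right (le_max_right _ _) (sq_nonneg _))
    have h4 : ‖(u - u') - ρ • A (u - u')‖ ≤ L * ‖u - u'‖ := by
      have := Real.sqrt_le_sqrt h3
      rwa [Real.sqrt_sq (norm_nonneg _), Real.sqrt_mul (le_max_left _ _),
        Real.sqrt_sq (norm_nonneg _)] at this
    exact le_trans h1 h4
  have hLnn : 0 ≤ L := Real.sqrt_nonneg _
  have hcontracting : ContractingWith ⟨L, hLnn⟩ Φ := by
    constructor
    · exact_mod_cast hL1
    · apply LipschitzWith.of_dist_le_mul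
      intro u u'
      rw [dist_eq_norm, dist_eq_norm]
      exact hΦlip u u'
  -- the fixed point
  set w : V := ContractingWith.fixedPoint Φ hcontracting with hwdef
  have hfix : Φ w = w := hcontracting.fixedPoint_isFixedPt
  have hfix' : P (w - ρ • (A w - z)) = w := hfix
  have hwK : w ∈ K := by rw [← hfix']; exact hPmem _
  have hwVI : ∀ k ∈ K, 0 ≤ ⟪A w - z, k - w⟫ := by
    intro k hk
    have := hPle (w - ρ • (A w - z)) k hk
    rw [hfix'] at this
    have h1 : w - ρ • (A w - z) - w = -(ρ • (A w - z)) := by abel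
    rw [h1, inner_neg_left, real_inner_smul_left] at this
    nlinarith
  -- convert fixed point of the VI back to the QVI
  have VIuniq : ∀ w' : V, w' ∈ K → (∀ k ∈ K, 0 ≤ ⟪A w' - z, k - w'⟫) → w' = w := by
    intro w' hw' hVI'
    have h1 := hwVI w' hw'
    have h2 := hVI' w hwK
    have h3 : ⟪A w - A w', w' - w⟫ ≥ 0 := by
      have e1 : ⟪A w - z, w' - w⟫ + ⟪A w' - z, w - w'⟫ = ⟪A w - A w', w' - w⟫ := by
        simp only [inner_sub_left, inner_sub_right]
        have c1 : ⟪z, w⟫ = ⟪z, w⟫ := rfl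
        linarith [real_inner_comm z w]
      linarith
    have h4 : μ * ‖w - w'‖ ^ 2 ≤ ⟪A (w - w'), w - w'⟫ := hAcoer _
    rw [hAsub w w'] at h3
    have h5 : ⟪A (w - w'), w' - w⟫ = - ⟪A (w - w'), w - w'⟫ := by
      rw [← inner_neg_right]; congr 1; abel
    rw [h5] at h3
    have h6 : ‖w - w'‖ ^ 2 ≤ 0 := by nlinarith
    have h7 : w - w' = 0 := by
      have := sq_nonneg ‖w - w'‖
      have : ‖w - w'‖ = 0 := by nlinarith [norm_nonneg (w - w')]
      exact norm_eq_zero.1 this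
    exact (sub_eq_zero.1 h7).symm
  refine ⟨E'.symm w, ⟨?_, ?_⟩, ?_⟩
  · have : E'.symm w - D (E'.symm w) = w := by
      have := E'.apply_symm_apply w
      rwa [hE'app] at this
    rw [this]; exact hwK
  · rintro v ⟨k, hk, rfl⟩
    have hxw : E'.symm w - D (E'.symm w) = w := by
      have := E'.apply_symm_apply w
      rwa [hE'app] at this
    have hvx : k + D (E'.symm w) - E'.symm w = k - w := by
      rw [show k + D (E'.symm w) - E'.symm w
            = k - (E'.symm w - D (E'.symm w)) from by abel, hxw]
    have hineq := hwVI k hk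
    rw [inner_sub_left, hA, hz] at hineq
    rw [ContinuousLinearMap.sub_apply, hvx]
    exact hineq
  · rintro y ⟨hyK, hyVI⟩
    set wy : V := y - D y with hwydef
    have hy : E'.symm wy = y := by
      have : E' y = wy := hE'app y
      rw [← this, E'.symm_apply_apply]
    have hVIy : ∀ k ∈ K, 0 ≤ ⟪A wy - z, k - wy⟫ := by
      intro k hk
      have hmem : k + D y ∈ (fun k => k + D y) '' K := ⟨k, hk, rfl⟩
      have := hyVI (k + D y) hmem
      have hvx : k + D y - y = k - wy := by rw [hwydef]; abel
      rw [ContinuousLinearMap.sub_apply, hvx] at this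
      rw [inner_sub_left, hA, hy, hz]
      exact this
    have : wy = w := VIuniq wy hyK hVIy
    rw [← hy, this]
end
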